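/- arXiv:2207.10588 — 8 statements merged into one kernel-verified Lean document; each statement's English description precedes it below -/
import Mathlib

section
/- Let R be an integral domain, let σ and τ be two index types, let f be a polynomial in the variables indexed by σ and g a polynomial in the variables indexed by τ, both viewed as polynomials over the disjoint union σ ⊔ τ via the canonical renamings (f using only σ-variables, g using only τ-variables). Then the sparsity of the product f·g equals the product of the sparsity of f and the sparsity of g. -/
set_option maxHeartbeats 1000000

open MvPolynomial Finsupp

private lemma e_inj {σ τ : Type*} :
    Function.Injective (fun p : (σ →₀ ℕ) × (τ →₀ ℕ) =>
      p.1.mapDomain (Sum.inl : σ → σ ⊕ τ) + p.2.mapDomain Sum.inr) := by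
  intro p q h
  have key : ∀ r : (σ →₀ ℕ) × (τ →₀ ℕ),
      Finsupp.sumFinsuppAddEquivProdFinsupp
        (r.1.mapDomain (Sum.inl : σ → σ ⊕ τ) + r.2.mapDomain Sum.inr) = r := by
    intro r
    ext x
    · simp only [map_add, Prod.fst_add, Finsupp.add_apply,
        Finsupp.fst_sumFinsuppAddEquivProdFinsupp]
      rw [Finsupp.mapDomain_apply Sum.inl_injective,
        Finsupp.mapDomain_notin_range _ _ (by simp)]
      simp
    · simp only [map_add, Prod.snd_add, Finsupp.add_apply,
        Finsupp.snd_sumFinsuppAddEquivProdFinsupp]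
      rw [Finsupp.mapDomain_apply Sum.inr_injective,
        Finsupp.mapDomain_notin_range _ _ (by simp)]
      simp
  have h' : p.1.mapDomain (Sum.inl : σ → σ ⊕ τ) + p.2.mapDomain Sum.inr
      = q.1.mapDomain Sum.inl + q.2.mapDomain Sum.inr := h
  calc p = Finsupp.sumFinsuppAddEquivProdFinsupp
            (p.1.mapDomain (Sum.inl : σ → σ ⊕ τ) + p.2.mapDomain Sum.inr) := (key p).symm
    _ = q := by rw [h']; exact key q

private lemma coeff_e {R : Type*} [CommRing R] {σ τ : Type*}
    (f : MvPolynomial σ R) (g : MvPolynomial τ R) (a : σ →₀ ℕ) (b : τ →₀ ℕ) :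
    MvPolynomial.coeff (a.mapDomain (Sum.inl : σ → σ ⊕ τ) + b.mapDomain Sum.inr)
      ((MvPolynomial.rename (Sum.inl : σ → σ ⊕ τ) f) *
        (MvPolynomial.rename (Sum.inr : τ → σ ⊕ τ) g))
      = f.coeff a * g.coeff b := by
  classical
  have hmem0 : ((a.mapDomain (Sum.inl : σ → σ ⊕ τ), b.mapDomain Sum.inr) :
      ((σ ⊕ τ) →₀ ℕ) × ((σ ⊕ τ) →₀ ℕ)) ∈
      Finset.HasAntidiagonal.antidiagonal (a.mapDomain (Sum.inl : σ → σ ⊕ τ) + b.mapDomain Sum.inr) :=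
    Finset.HasAntidiagonal.mem_antidiagonal.mpr rfl
  rw [MvPolynomial.coeff_mul]
  rw [Finset.sum_eq_single_of_mem _ hmem0]
  · rw [coeff_rename_mapDomain _ Sum.inl_injective,
      coeff_rename_mapDomain _ Sum.inr_injective]
  · rintro ⟨u, v⟩ hmem hne
    rw [Finset.HasAntidiagonal.mem_antidiagonal] at hmem
    by_contra hc
    have hu : u ∈ (MvPolynomial.rename (Sum.inl : σ → σ ⊕ τ) f).support := by
      rw [MvPolynomial.mem_support_iff]; intro h; apply hc; rw [h, zero_mul]
    have hv : v ∈ (MvPolynomial.rename (Sum.inr : τ → σ ⊕ τ) g).support := by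
      rw [MvPolynomial.mem_support_iff]; intro h; apply hc; rw [h, mul_zero]
    rw [MvPolynomial.support_rename_of_injective Sum.inl_injective,
      Finset.mem_image] at hu
    rw [MvPolynomial.support_rename_of_injective Sum.inr_injective,
      Finset.mem_image] at hv
    obtain ⟨a', _, rfl⟩ := hu
    obtain ⟨b', _, rfl⟩ := hv
    have heq : ((a', b') : (σ →₀ ℕ) × (τ →₀ ℕ)) = (a, b) := e_inj hmem
    exact hne (by rw [Prod.mk.injEq] at heq; rw [heq.1, heq.2])

/-- **Sparsity is multiplicative for polynomials in disjoint sets of variables.**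
Over an integral domain `R`, if `f` is a polynomial in the variables indexed by `σ` and
`g` a polynomial in the variables indexed by `τ`, both viewed as polynomials over `σ ⊕ τ`
via the canonical renamings, then the sparsity (number of monomials with nonzero
coefficient, i.e. the cardinality of the support) of `f · g` equals the product of the
sparsities of `f` and `g`. -/
theorem sparsity_mul_disjoint_vars {R : Type*} [CommRing R] [IsDomain R]
    {σ τ : Type*} (f : MvPolynomial σ R) (g : MvPolynomial τ R) :
    ((MvPolynomial.rename (Sum.inl : σ → σ ⊕ τ) f) *
        (MvPolynomial.rename (Sum.inr : τ → σ ⊕ τ) g)).support.card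
      = f.support.card * g.support.card := by
  classical
  have hsupp : ((MvPolynomial.rename (Sum.inl : σ → σ ⊕ τ) f) *
        (MvPolynomial.rename (Sum.inr : τ → σ ⊕ τ) g)).support
      = (f.support ×ˢ g.support).image (fun p =>
          p.1.mapDomain (Sum.inl : σ → σ ⊕ τ) + p.2.mapDomain Sum.inr) := by
    ext d
    constructor
    · intro hd
      have := MvPolynomial.support_mul _ _ hd
      rw [Finset.mem_add] at this
      obtain ⟨u, hu, v, hv, rfl⟩ := this
      rw [MvPolynomial.support_rename_of_injective Sum.inl_injective,
        Finset.mem_image] at hu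
      rw [MvPolynomial.support_rename_of_injective Sum.inr_injective,
        Finset.mem_image] at hv
      obtain ⟨a, ha, rfl⟩ := hu
      obtain ⟨b, hb, rfl⟩ := hv
      exact Finset.mem_image.mpr ⟨(a, b), Finset.mem_product.mpr ⟨ha, hb⟩, rfl⟩
    · intro hd
      rw [Finset.mem_image] at hd
      obtain ⟨⟨a, b⟩, hab, rfl⟩ := hd
      rw [Finset.mem_product] at hab
      rw [MvPolynomial.mem_support_iff, coeff_e]
      exact mul_ne_zero (MvPolynomial.mem_support_iff.mp hab.1)
        (MvPolynomial.mem_support_iff.mp hab.2)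
  rw [hsupp, Finset.card_image_of_injective _ e_inj, Finset.card_product]
end

section
/- Let R be an integral domain, P ∈ R[x_1,…,x_N] a polynomial of sparsity σ, and d ≥ 1. Then the sparsity of Q_d equals σ^d. -/
open MvPolynomial Finset Pointwise

private lemma zero_of_disj {σ : Type*} {a b : σ →₀ ℕ} (hd : Disjoint a.support b.support)
    {i : σ} (hb : b i ≠ 0) : a i = 0 := by
  by_contra ha
  exact Finset.disjoint_left.mp hd (Finsupp.mem_support_iff.mpr ha)
    (Finsupp.mem_support_iff.mpr hb)

private lemma add_eq_add_of_disjoint {σ : Type*} {u u' v v' : σ →₀ ℕ}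
    (h1 : Disjoint u.support v.support) (h2 : Disjoint u.support v'.support)
    (h3 : Disjoint u'.support v.support) (h4 : Disjoint u'.support v'.support)
    (h : u + v = u' + v') : u = u' ∧ v = v' := by
  have key : ∀ i, u i = u' i ∧ v i = v' i := by
    intro i
    have hi : u i + v i = u' i + v' i := by
      have := congrArg (fun w => w i) h
      simpa using this
    by_cases hv : v i = 0
    · by_cases hv' : v' i = 0
      · constructor <;> omega
      · have hu := zero_of_disj h2 hv'
        have hu' := zero_of_disj h4 hv'
        omega
    · have hu := zero_of_disj h1 hv
      have hu' := zero_of_disj h3 hv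
      omega
  exact ⟨Finsupp.ext fun i => (key i).1, Finsupp.ext fun i => (key i).2⟩

/-- Over a domain, if the monomial supports of `f` and of `g` involve disjoint sets of
variables, then the support of `f * g` is the Minkowski sum of the supports. -/
private lemma support_mul_eq_of_disjoint {R : Type*} [CommRing R] [IsDomain R] {σ : Type*}
    [DecidableEq σ] (f g : MvPolynomial σ R)
    (h : ∀ u ∈ f.support, ∀ v ∈ g.support, Disjoint u.support v.support) :
    (f * g).support = f.support + g.support := by
  apply Finset.Subset.antisymm (MvPolynomial.support_mul f g)
  intro m hm
  rw [Finset.mem_add] at hm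
  obtain ⟨u, hu, v, hv, rfl⟩ := hm
  rw [MvPolynomial.mem_support_iff, MvPolynomial.coeff_mul,
    Finset.sum_eq_single (u, v) ?h1 ?h2]
  · exact mul_ne_zero (MvPolynomial.mem_support_iff.mp hu) (MvPolynomial.mem_support_iff.mp hv)
  case h1 =>
    rintro ⟨u', v'⟩ hp hne
    by_contra hc
    have hu' : u' ∈ f.support := by
      rw [MvPolynomial.mem_support_iff]; intro h0; apply hc; simp [h0]
    have hv' : v' ∈ g.support := by
      rw [MvPolynomial.mem_support_iff]; intro h0; apply hc; simp [h0]
    rw [Finset.HasAntidiagonal.mem_antidiagonal] at hp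
    obtain ⟨rfl, rfl⟩ := add_eq_add_of_disjoint (h u' hu' v' hv') (h u' hu' v hv)
      (h u hu v' hv') (h u hu v hv) hp
    exact hne rfl
  case h2 =>
    intro hn
    simp at hn

private lemma card_support_mul_of_disjoint {R : Type*} [CommRing R] [IsDomain R] {σ : Type*}
    [DecidableEq σ] (f g : MvPolynomial σ R)
    (h : ∀ u ∈ f.support, ∀ v ∈ g.support, Disjoint u.support v.support) :
    (f * g).support.card = f.support.card * g.support.card := by
  rw [support_mul_eq_of_disjoint f g h, Finset.add_def,
    Finset.card_image_of_injOn, Finset.card_product]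
  rintro ⟨u, v⟩ huv ⟨u', v'⟩ huv' he
  rw [Finset.mem_coe, Finset.mem_product] at huv huv'
  obtain ⟨h1, h2⟩ := add_eq_add_of_disjoint (h u huv.1 v huv.2) (h u huv.1 v' huv'.2)
    (h u' huv'.1 v huv.2) (h u' huv'.1 v' huv'.2) he
  simp [h1, h2]

/-- `Qd d P` is the product of `d` copies of `P` in pairwise disjoint sets of variables:
`Q_d = ∏_{k=1}^d rename_k(P)`, where `rename_k` substitutes `x_{k,i}` for `x_i`. -/
noncomputable def Qd {R : Type*} [CommRing R] {N : ℕ} (d : ℕ)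
    (P : MvPolynomial (Fin N) R) : MvPolynomial (Fin d × Fin N) R :=
  ∏ k : Fin d, MvPolynomial.rename (fun i => (k, i)) P

private lemma Qd_succ {R : Type*} [CommRing R] {N : ℕ} (d : ℕ)
    (P : MvPolynomial (Fin N) R) :
    Qd (d + 1) P = MvPolynomial.rename (fun i => ((0 : Fin (d + 1)), i)) P *
      MvPolynomial.rename (Prod.map Fin.succ id) (Qd d P) := by
  rw [Qd, Fin.prod_univ_succ, Qd, map_prod]
  congr 1
  apply Finset.prod_congr rfl
  intro k _
  rw [MvPolynomial.rename_rename]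
  rfl

/-- **Lemma 4.1(2):** over an integral domain `R`, if `P ∈ R[x_1,…,x_N]` has sparsity `σ`
(i.e. exactly `σ` monomials with nonzero coefficient) and `d ≥ 1`, then the sparsity of
`Q_d` equals `σ ^ d`. -/
theorem sparsity_Qd {R : Type*} [CommRing R] [IsDomain R] {N : ℕ}
    (P : MvPolynomial (Fin N) R) (σ : ℕ) (hσ : P.support.card = σ)
    (d : ℕ) (hd : 1 ≤ d) :
    (Qd d P).support.card = σ ^ d := by
  clear hd
  induction d with
  | zero =>
    have h1 : Qd 0 P = MvPolynomial.monomial 0 (1 : R) := by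
      simp [Qd, MvPolynomial.monomial_zero']
    classical
    rw [h1, MvPolynomial.support_monomial, if_neg (one_ne_zero' R)]
    simp
  | succ d ih =>
    rw [Qd_succ, pow_succ']
    have hinj1 : Function.Injective (fun i : Fin N => ((0 : Fin (d + 1)), i)) := by
      intro a b hab
      simpa using hab
    have hinj2 : Function.Injective (Prod.map Fin.succ (id : Fin N → Fin N)) :=
      (Fin.succ_injective d).prodMap Function.injective_id
    rw [card_support_mul_of_disjoint]
    · rw [MvPolynomial.support_rename_of_injective hinj1,
        MvPolynomial.support_rename_of_injective hinj2,
        Finset.card_image_of_injective _ (Finsupp.mapDomain_injective hinj1),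
        Finset.card_image_of_injective _ (Finsupp.mapDomain_injective hinj2), hσ, ih]
    · intro u hu v hv
      rw [MvPolynomial.support_rename_of_injective hinj1, Finset.mem_image] at hu
      rw [MvPolynomial.support_rename_of_injective hinj2, Finset.mem_image] at hv
      obtain ⟨w, _, rfl⟩ := hu
      obtain ⟨z, _, rfl⟩ := hv
      rw [Finset.disjoint_left]
      intro x hx hx'
      have h1 : x ∈ w.support.image (fun i : Fin N => ((0 : Fin (d + 1)), i)) :=
        Finsupp.mapDomain_support hx
      have h2 : x ∈ z.support.image (Prod.map Fin.succ (id : Fin N → Fin N)) :=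
        Finsupp.mapDomain_support hx'
      rw [Finset.mem_image] at h1 h2
      obtain ⟨i, _, rfl⟩ := h1
      obtain ⟨⟨k, j⟩, _, hkj⟩ := h2
      have : Fin.succ k = 0 := congrArg Prod.fst hkj
      exact absurd this (Fin.succ_ne_zero k)
end

section
/- Let R be an integral domain, P ∈ R[x_1,…,x_N] a nonzero polynomial of sparsity σ, and d ≥ 1. Then there exists a vector a ∈ R^N such that P(X+a) has at most σ−1 monomials if and only if there exists a vector a_d ∈ R^{d·N} such that Q_d(Y_d + a_d) has at most (σ−1)^d monomials. -/
/-- The shift of a multivariate polynomial by a vector `a`: the image of `f` under the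
`R`-algebra endomorphism sending each variable `x_i` to `x_i + a_i`. -/
noncomputable def shift {R : Type*} [CommRing R] {σ : Type*} (a : σ → R)
    (f : MvPolynomial σ R) : MvPolynomial σ R :=
  MvPolynomial.aeval (fun i => MvPolynomial.X i + MvPolynomial.C (a i)) f

open MvPolynomial

section aux
variable {R : Type*} [CommRing R] {σ τ : Type*}

lemma shift_rename (a : τ → R) (g : σ → τ) (f : MvPolynomial σ R) :
    shift a (rename g f) = rename g (shift (a ∘ g) f) := by
  simp only [shift, aeval_rename, comp_aeval_apply]
  have : ((fun i => X i + C (a i)) ∘ g) = fun i => (rename g) (X i + C ((a ∘ g) i)) := by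
    funext i; simp [Function.comp]
  rw [this]

lemma shift_shift (a b : σ → R) (f : MvPolynomial σ R) :
    shift a (shift b f) = shift (a + b) f := by
  simp only [shift, comp_aeval_apply]
  have : (fun i => (aeval fun i => X i + C (a i)) (X i + C (b i)))
      = fun i => X i + C ((a + b) i) := by
    funext i; simp only [map_add, MvPolynomial.aeval_X, MvPolynomial.aeval_C, MvPolynomial.algebraMap_eq, Pi.add_apply]; ring
  rw [this]

lemma shift_zero (f : MvPolynomial σ R) : shift (0 : σ → R) f = f := by
  simp [shift]

lemma shift_ne_zero {a : σ → R} {f : MvPolynomial σ R} (hf : f ≠ 0) :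
    shift a f ≠ 0 := by
  intro h
  apply hf
  have := congrArg (shift (-a)) h
  rw [shift_shift] at this
  simpa [shift] using this

/-- Two-factor key lemma: if addition is injective on support pairs, support card is
multiplicative (over a domain). -/
lemma card_support_mul [IsDomain R] (p q : MvPolynomial σ R)
    (h : Set.InjOn (fun z : (σ →₀ ℕ) × (σ →₀ ℕ) => z.1 + z.2)
      (p.support ×ˢ q.support : Finset _)) :
    (p * q).support.card = p.support.card * q.support.card := by
  classical
  have hsupp : (p * q).support =
      (p.support ×ˢ q.support).image fun z => z.1 + z.2 := by
    apply Finset.Subset.antisymm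
    · intro m hm
      have := MvPolynomial.support_mul p q hm
      rwa [Finset.add_def] at this
    · intro m hm
      obtain ⟨z, hz, rfl⟩ := Finset.mem_image.mp hm
      obtain ⟨m1, n1⟩ := z
      rw [Finset.mem_product] at hz
      rw [MvPolynomial.mem_support_iff, MvPolynomial.coeff_mul]
      rw [Finset.sum_eq_single (m1, n1)]
      · exact mul_ne_zero (MvPolynomial.mem_support_iff.mp hz.1)
          (MvPolynomial.mem_support_iff.mp hz.2)
      · intro b hb hne
        by_contra hb0
        have h1 : b.1 ∈ p.support := by
          rw [MvPolynomial.mem_support_iff]; intro h0; apply hb0; rw [h0, zero_mul]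
        have h2 : b.2 ∈ q.support := by
          rw [MvPolynomial.mem_support_iff]; intro h0; apply hb0; rw [h0, mul_zero]
        have hsum : b.1 + b.2 = m1 + n1 := (Finset.HasAntidiagonal.mem_antidiagonal.mp hb)
        have := h (Finset.mem_coe.mpr (Finset.mem_product.mpr ⟨h1, h2⟩))
          (Finset.mem_coe.mpr (Finset.mem_product.mpr hz)) hsum
        exact hne (by simpa using this)
      · intro hnotin
        exact absurd (Finset.HasAntidiagonal.mem_antidiagonal.mpr rfl) hnotin
  rw [hsupp, Finset.card_image_of_injOn h, Finset.card_product]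

variable {ι : Type*}

lemma support_prod_vars [DecidableEq ι] (s : Finset ι) (g : ι → MvPolynomial τ R) :
    ∀ m ∈ (∏ k ∈ s, rename (fun i => (k, i)) (g k)).support,
      ∀ x ∈ m.support, x.1 ∈ s := by
  classical
  induction s using Finset.induction with
  | empty =>
    intro m hm x hx
    rw [Finset.prod_empty] at hm
    have h1 : (1 : MvPolynomial (ι × τ) R).support ⊆ {0} := by
      rw [← MvPolynomial.C_1, MvPolynomial.C_apply]
      exact MvPolynomial.support_monomial_subset
    have : m = 0 := Finset.mem_singleton.mp (h1 hm)
    simp [this] at hx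
  | @insert a s' ha ih =>
    intro m hm x hx
    rw [Finset.prod_insert ha] at hm
    have := MvPolynomial.support_mul _ _ hm
    rw [Finset.add_def, Finset.mem_image] at this
    obtain ⟨⟨m1, n1⟩, hz, rfl⟩ := this
    rw [Finset.mem_product] at hz
    have hx' := Finsupp.support_add hx
    rw [Finset.mem_union] at hx'
    rcases hx' with hx1 | hx2
    · -- x ∈ m1.support, m1 comes from rename
      have hs := hz.1
      rw [MvPolynomial.support_rename_of_injective
        (fun i j hij => by simpa using congrArg Prod.snd hij)] at hs
      obtain ⟨m0, _, rfl⟩ := Finset.mem_image.mp hs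
      have := Finsupp.mapDomain_support hx1
      obtain ⟨i, _, rfl⟩ := Finset.mem_image.mp this
      exact Finset.mem_insert_self a s'
    · exact Finset.mem_insert_of_mem (ih _ hz.2 x hx2)

lemma card_support_prod [IsDomain R] [DecidableEq ι] (s : Finset ι)
    (g : ι → MvPolynomial τ R) :
    (∏ k ∈ s, rename (fun i => (k, i)) (g k)).support.card
      = ∏ k ∈ s, (g k).support.card := by
  classical
  induction s using Finset.induction with
  | empty =>
    rw [Finset.prod_empty, Finset.prod_empty, ← MvPolynomial.C_1,
      MvPolynomial.C_apply, MvPolynomial.support_monomial]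
    simp
  | @insert a s' ha ih =>
    rw [Finset.prod_insert ha, Finset.prod_insert ha, ← ih]
    rw [card_support_mul]
    · congr 1
      rw [MvPolynomial.support_rename_of_injective
        (fun i j hij => by simpa using congrArg Prod.snd hij)]
      exact Finset.card_image_of_injective _ (Finsupp.mapDomain_injective
        (fun i j hij => by simpa using congrArg Prod.snd hij))
    · -- injectivity of addition on support pairs
      rintro ⟨m1, n1⟩ h1 ⟨m2, n2⟩ h2 heq
      simp only [Finset.coe_product, Set.mem_prod, Finset.mem_coe] at h1 h2
      replace heq : m1 + n1 = m2 + n2 := heq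
      -- m's are supported on {a} × τ, n's on s' × τ
      have hm : ∀ (m : _) , m ∈ (rename (fun i => (a, i)) (g a)).support →
          ∀ x ∈ Finsupp.support m, x.1 = a := by
        intro m hm x hx
        rw [MvPolynomial.support_rename_of_injective
          (fun i j hij => by simpa using congrArg Prod.snd hij)] at hm
        obtain ⟨m0, _, rfl⟩ := Finset.mem_image.mp hm
        obtain ⟨i, _, rfl⟩ := Finset.mem_image.mp (Finsupp.mapDomain_support hx)
        rfl
      have hn := support_prod_vars s' g
      have key : m1 = m2 := by
        ext x
        by_cases hxa : x.1 = a
        · have e1 : n1 x = 0 := by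
            by_contra h0
            have := hn _ h1.2 x (Finsupp.mem_support_iff.mpr h0)
            rw [hxa] at this; exact ha this
          have e2 : n2 x = 0 := by
            by_contra h0
            have := hn _ h2.2 x (Finsupp.mem_support_iff.mpr h0)
            rw [hxa] at this; exact ha this
          have h' : m1 x + n1 x = m2 x + n2 x := by
            simpa using DFunLike.congr_fun heq x
          rw [e1, e2] at h'; simpa using h'
        · have e1 : m1 x = 0 := by
            by_contra h0
            exact hxa (hm _ h1.1 x (Finsupp.mem_support_iff.mpr h0))
          have e2 : m2 x = 0 := by
            by_contra h0
            exact hxa (hm _ h2.1 x (Finsupp.mem_support_iff.mpr h0))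
          rw [e1, e2]
      have : n1 = n2 := by
        have h' : m1 + n1 = m1 + n2 := by rw [heq, key]
        exact add_left_cancel h'
      simp [key, this]

end aux

/-- **Lemma 4.1(4):** over an integral domain `R`, for a nonzero `P ∈ R[x_1,…,x_N]` of
sparsity `σ` and `d ≥ 1`: there exists `a ∈ R^N` such that `P(X+a)` has at most `σ−1`
monomials if and only if there exists `a_d ∈ R^{d·N}` such that `Q_d(Y_d+a_d)` has at
most `(σ−1)^d` monomials. -/
theorem exists_sparsifying_shift_iff_Qd {R : Type*} [CommRing R] [IsDomain R] {N : ℕ}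
    (P : MvPolynomial (Fin N) R) (hP : P ≠ 0) (σ : ℕ) (hσ : P.support.card = σ)
    (d : ℕ) (hd : 1 ≤ d) :
    (∃ a : Fin N → R, (shift a P).support.card ≤ σ - 1)
      ↔ (∃ ad : Fin d × Fin N → R, (shift ad (Qd d P)).support.card ≤ (σ - 1) ^ d) := by
  classical
  have hσ1 : 1 ≤ σ := by
    rw [← hσ]
    exact Finset.card_pos.mpr (MvPolynomial.support_nonempty.mpr hP)
  have key : ∀ ad : Fin d × Fin N → R,
      (shift ad (Qd d P)).support.card
        = ∏ k : Fin d, (shift (fun i => ad (k, i)) P).support.card := by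
    intro ad
    have h1 : shift ad (Qd d P)
        = ∏ k : Fin d, rename (fun i => (k, i)) (shift (fun i => ad (k, i)) P) := by
      unfold Qd shift
      rw [map_prod]
      refine Finset.prod_congr rfl fun k _ => ?_
      exact shift_rename ad (fun i => (k, i)) P
    rw [h1, card_support_prod]
  constructor
  · rintro ⟨a, ha⟩
    refine ⟨fun p => a p.2, ?_⟩
    rw [key]
    calc ∏ k : Fin d, (shift (fun i => a i) P).support.card
        ≤ ∏ _k : Fin d, (σ - 1) := Finset.prod_le_prod' (fun k _ => ha)
      _ = (σ - 1) ^ d := by simp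
  · rintro ⟨ad, had⟩
    rw [key] at had
    by_contra hcon
    push_neg at hcon
    have hall : ∀ k : Fin d, σ ≤ (shift (fun i => ad (k, i)) P).support.card := by
      intro k
      have := hcon (fun i => ad (k, i))
      omega
    have : σ ^ d ≤ (σ - 1) ^ d := by
      calc σ ^ d = ∏ _k : Fin d, σ := by simp
        _ ≤ ∏ k : Fin d, (shift (fun i => ad (k, i)) P).support.card :=
            Finset.prod_le_prod' (fun k _ => hall k)
        _ ≤ (σ - 1) ^ d := had
    have hlt : (σ - 1) ^ d < σ ^ d :=
      Nat.pow_lt_pow_left (by omega) (by omega)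
    omega
end

section
/- Let R be a commutative ring and let P be a polynomial in two disjoint groups of variables X = {x_0,…,x_N} and W = {w_1,…,w_t} such that every monomial in the support of P has total degree exactly 1 in the W-variables. Then for every b ∈ R^{N+1} and every c ∈ R^t, the sparsity of P(X+b, W+c) is at least the sparsity of P(X+b, W). -/
open MvPolynomial

section Aux

variable {R : Type*} [CommRing R] {σ τ : Type*}

lemma MvPolynomial.IsWeightedHomogeneous.pow' {w : σ → ℕ} {φ : MvPolynomial σ R} {n : ℕ}
    (h : IsWeightedHomogeneous w φ n) (k : ℕ) :
    IsWeightedHomogeneous w (φ ^ k) (k * n) := by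
  induction k with
  | zero => simpa using isWeightedHomogeneous_one R w
  | succ k ih =>
    rw [pow_succ, add_one_mul]
    exact ih.mul h

lemma aux_aeval_homog (w : τ → ℕ) (f : σ → MvPolynomial τ R) (d : σ → ℕ)
    (hf : ∀ s, IsWeightedHomogeneous w (f s) (d s)) (p : MvPolynomial σ R) (n : ℕ)
    (hp : ∀ m ∈ p.support, Finsupp.weight d m = n) :
    IsWeightedHomogeneous w (aeval f p) n := by
  rw [p.as_sum, map_sum]
  apply IsWeightedHomogeneous.sum
  intro m hm
  rw [aeval_monomial]
  have h1 : IsWeightedHomogeneous w ((algebraMap R (MvPolynomial τ R)) (coeff m p)) 0 :=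
    isWeightedHomogeneous_C w _
  have h2 : IsWeightedHomogeneous w (m.prod fun s k => f s ^ k)
      (∑ s ∈ m.support, m s * d s) := by
    rw [Finsupp.prod]
    exact IsWeightedHomogeneous.prod m.support _ _ (fun s _ => (hf s).pow' (m s))
  have h3 := h1.mul h2
  rw [zero_add] at h3
  have he : (∑ s ∈ m.support, m s * d s) = n := by
    rw [← hp m hm, Finsupp.weight_apply, Finsupp.sum]
    simp [smul_eq_mul]
  rwa [he] at h3

end Aux

/-- **General fact behind Lemma 3.4(1):** let `R` be a commutative ring and `P` a
polynomial in two disjoint groups of variables `X = {x_0,…,x_N}` and `W = {w_1,…,w_t}`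
such that every monomial in the support of `P` has total degree exactly `1` in the
`W`-variables. Then for every `b ∈ R^{N+1}` and `c ∈ R^t`, the sparsity of
`P(X+b, W+c)` is at least the sparsity of `P(X+b, W)` (shifting only the `X`-variables). -/
theorem sparsity_shiftW_ge {R : Type*} [CommRing R] {N t : ℕ}
    (P : MvPolynomial (Fin (N + 1) ⊕ Fin t) R)
    (hP : ∀ mo ∈ P.support, (∑ j : Fin t, mo (Sum.inr j)) = 1)
    (b : Fin (N + 1) → R) (c : Fin t → R) :
    (aeval (Sum.elim (fun i => X (Sum.inl i) + C (b i)) (fun j => X (Sum.inr j)) :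
        Fin (N + 1) ⊕ Fin t → MvPolynomial (Fin (N + 1) ⊕ Fin t) R) P).support.card
      ≤ (aeval (Sum.elim (fun i => X (Sum.inl i) + C (b i))
            (fun j => X (Sum.inr j) + C (c j)) :
        Fin (N + 1) ⊕ Fin t → MvPolynomial (Fin (N + 1) ⊕ Fin t) R) P).support.card := by
  classical
  -- the weight: 0 on X-variables, 1 on W-variables
  set w : Fin (N + 1) ⊕ Fin t → ℕ := Sum.elim (fun _ => 0) (fun _ => 1) with hw
  -- weight of a monomial is its total W-degree
  have hweight : ∀ m : Fin (N + 1) ⊕ Fin t →₀ ℕ,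
      Finsupp.weight w m = ∑ j : Fin t, m (Sum.inr j) := by
    intro m
    rw [Finsupp.weight_apply, Finsupp.sum]
    rw [Finset.sum_subset (Finset.subset_univ m.support)
      (by intro x _ hx; simp [Finsupp.notMem_support_iff.mp hx])]
    rw [Fintype.sum_sum_type]
    simp [hw]
  set f1 : Fin (N + 1) ⊕ Fin t → MvPolynomial (Fin (N + 1) ⊕ Fin t) R :=
    Sum.elim (fun i => X (Sum.inl i) + C (b i)) (fun j => X (Sum.inr j)) with hf1
  set f2 : Fin (N + 1) ⊕ Fin t → MvPolynomial (Fin (N + 1) ⊕ Fin t) R :=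
    Sum.elim (fun i => X (Sum.inl i) + C (b i)) (fun j => X (Sum.inr j) + C (c j)) with hf2
  set g : Fin (N + 1) ⊕ Fin t → MvPolynomial (Fin (N + 1) ⊕ Fin t) R :=
    Sum.elim (fun i => X (Sum.inl i)) (fun j => X (Sum.inr j) + C (c j)) with hg
  set h : Fin (N + 1) ⊕ Fin t → MvPolynomial (Fin (N + 1) ⊕ Fin t) R :=
    Sum.elim (fun i => X (Sum.inl i)) (fun j => C (c j)) with hh
  set Q := aeval f1 P with hQ
  -- Q is weighted homogeneous of degree 1
  have hQhom : IsWeightedHomogeneous w Q 1 := by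
    apply aux_aeval_homog w f1 w
    · rintro (i | j)
      · simpa [hf1, hw] using (isWeightedHomogeneous_X (R := R) w (Sum.inl i)).add
          (isWeightedHomogeneous_C w (b i))
      · simpa [hf1, hw] using isWeightedHomogeneous_X (R := R) w (Sum.inr j)
    · intro m hm
      rw [hweight]
      exact hP m hm
  -- composition: aeval f2 P = aeval g Q
  have hcomp : aeval f2 P = aeval g Q := by
    have hfun : (fun s => aeval g (f1 s)) = f2 := by
      funext s
      rcases s with i | j <;> simp [hf1, hf2, hg]
    rw [hQ, ← AlgHom.comp_apply, comp_aeval, hfun]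
  -- key decomposition on monomials of weight 1 : aeval g = id + aeval h
  have hkey : ∀ (m : Fin (N + 1) ⊕ Fin t →₀ ℕ) (a : R), Finsupp.weight w m = 1 →
      aeval g (monomial m a) = monomial m a + aeval h (monomial m a) := by
    intro m a hm1
    rw [hweight] at hm1
    obtain ⟨j, hj⟩ : ∃ j : Fin t, m (Sum.inr j) ≠ 0 := by
      by_contra hc
      push_neg at hc
      simp [hc] at hm1
    have hle : m (Sum.inr j) ≤ ∑ j' : Fin t, m (Sum.inr j') :=
      Finset.single_le_sum (f := fun j' => m (Sum.inr j')) (fun i _ => Nat.zero_le _)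
        (Finset.mem_univ j)
    have hj1 : m (Sum.inr j) = 1 := by omega
    set m₁ := m.erase (Sum.inr j) with hm₁
    have hsplit : m = Finsupp.single (Sum.inr j) 1 + m₁ := by
      have hs := Finsupp.single_add_erase (Sum.inr j) m
      rw [hj1] at hs
      exact hs.symm
    have hm₁inr : ∀ j' : Fin t, m₁ (Sum.inr j') = 0 := by
      intro j'
      by_cases hjj : j' = j
      · simp [hm₁, hjj]
      · have hpair : m (Sum.inr j) + m (Sum.inr j') ≤ ∑ j'' : Fin t, m (Sum.inr j'') := by
          rw [← Finset.sum_pair (f := fun j'' => m (Sum.inr j''))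
            (show j ≠ j' from fun hc => hjj hc.symm)]
          exact Finset.sum_le_sum_of_subset (Finset.subset_univ _)
        have h3 : m (Sum.inr j') = 0 := by omega
        rw [hm₁, Finsupp.erase_ne (fun hc => hjj (Sum.inr.inj hc))]
        exact h3
    -- aeval of monomials supported on inl is the identity (for g and h)
    have hfix : ∀ (F : Fin (N + 1) ⊕ Fin t → MvPolynomial (Fin (N + 1) ⊕ Fin t) R),
        (∀ i, F (Sum.inl i) = X (Sum.inl i)) →
        aeval F (monomial m₁ a) = monomial m₁ a := by
      intro F hF
      rw [aeval_monomial, monomial_eq, algebraMap_eq]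
      congr 1
      rw [Finsupp.prod, Finsupp.prod]
      apply Finset.prod_congr rfl
      intro s hs
      rcases s with i | j'
      · rw [hF i]
      · exact absurd (Finsupp.mem_support_iff.mp hs) (by simp [hm₁inr j'])
    have hmono : monomial m a = X (Sum.inr j) * monomial m₁ a := by
      rw [hsplit, monomial_single_add, pow_one]
    rw [hmono, map_mul, map_mul, hfix g (fun i => by simp [hg]),
      hfix h (fun i => by simp [hh])]
    have hgX : aeval g (X (Sum.inr j) : MvPolynomial (Fin (N + 1) ⊕ Fin t) R)
        = X (Sum.inr j) + C (c j) := by simp [hg]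
    have hhX : aeval h (X (Sum.inr j) : MvPolynomial (Fin (N + 1) ⊕ Fin t) R)
        = C (c j) := by simp [hh]
    rw [hgX, hhX, add_mul]
  -- hence aeval g Q = Q + aeval h Q
  have hdecomp : aeval g Q = Q + aeval h Q := by
    conv_lhs => rw [Q.as_sum]
    rw [map_sum,
      Finset.sum_congr rfl (fun m hm => hkey m _ (hQhom (mem_support_iff.mp hm))),
      Finset.sum_add_distrib, ← map_sum, ← Q.as_sum]
  -- aeval h Q is homogeneous of degree 0
  have hDhom : IsWeightedHomogeneous w (aeval h Q) 0 := by
    apply aux_aeval_homog w h (fun _ => 0)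
    · rintro (i | j)
      · simpa [hh, hw] using isWeightedHomogeneous_X (R := R) w (Sum.inl i)
      · simpa [hh] using isWeightedHomogeneous_C w (c j)
    · intro m _
      simp [Finsupp.weight_apply, Finsupp.sum]
  -- the degree-1 component of aeval g Q is Q
  have hcomp1 : weightedHomogeneousComponent w 1 (aeval g Q) = Q := by
    rw [hdecomp, map_add, hQhom.weightedHomogeneousComponent_same,
      hDhom.weightedHomogeneousComponent_ne 1 one_ne_zero, add_zero]
  -- support of a homogeneous component is contained in the support
  have hsub : Q.support ⊆ (aeval g Q).support := by
    intro m hm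
    rw [← hcomp1] at hm
    rw [mem_support_iff] at hm ⊢
    rw [coeff_weightedHomogeneousComponent] at hm
    intro hc
    apply hm
    split
    · exact hc
    · rfl
  rw [hcomp]
  exact Finset.card_le_card hsub
end

section
/- Suppose a = (a_1,…,a_N) ∈ R^N is a common zero of g_1,…,g_t, and let a′ = (a′_0, a′_1,…,a′_N) ∈ R^{N+1} be defined by a′_i = a_i for 1 ≤ i ≤ N and a′_0 = −(a_1 + ⋯ + a_N). Then the sparsity of P_S(X″+a′, W) (shift only the x-variables by a′, leaving the w-variables unshifted) is exactly one less than the sparsity of P_S. -/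
open MvPolynomial Function

section helpers
variable {R : Type*} [CommRing R]

/-- Support of a sum of monomials with injective exponents. -/
lemma aux_support_sum_monomial {ι α : Type*} [DecidableEq ι] (E : α → (ι →₀ ℕ)) (hE : Function.Injective E)
    (s : Finset α) (c : α → R) (hc : ∀ x ∈ s, c x ≠ 0) :
    (∑ x ∈ s, (monomial (E x) (c x) : MvPolynomial ι R)).support = s.image E := by
  classical
  have hdisj : ∀ x y : α, x ≠ y →
      Disjoint (monomial (E x) (c x) : MvPolynomial ι R).support
        (monomial (E y) (c y) : MvPolynomial ι R).support := by
    intro x y hxy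
    refine Finset.disjoint_of_subset_left support_monomial_subset
      (Finset.disjoint_of_subset_right support_monomial_subset ?_)
    simpa using fun h => hxy (hE h)
  have h1 : (∑ x ∈ s, (monomial (E x) (c x) : MvPolynomial ι R)).support
      = s.biUnion fun x => (monomial (E x) (c x) : MvPolynomial ι R).support :=
    by
    have := Finsupp.support_sum_eq_biUnion s hdisj
    rw [← AddMonoidAlgebra.coeff_sum] at this
    exact this
  rw [h1]
  refine Finset.ext fun m => ?_
  simp only [Finset.mem_biUnion, Finset.mem_image]
  constructor
  · rintro ⟨x, hx, hm⟩
    have : (monomial (E x) (c x) : MvPolynomial ι R).support = {E x} := by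
      rw [support_monomial, if_neg (hc x hx)]
    rw [this, Finset.mem_singleton] at hm
    exact ⟨x, hx, hm.symm⟩
  · rintro ⟨x, hx, rfl⟩
    refine ⟨x, hx, ?_⟩
    rw [support_monomial, if_neg (hc x hx)]
    exact Finset.mem_singleton_self _

lemma aux_card_support_sum_monomial {ι α : Type*} [DecidableEq ι] (E : α → (ι →₀ ℕ))
    (hE : Function.Injective E) (s : Finset α) (c : α → R) (hc : ∀ x ∈ s, c x ≠ 0) :
    (∑ x ∈ s, (monomial (E x) (c x) : MvPolynomial ι R)).support.card = s.card := by
  rw [aux_support_sum_monomial E hE s c hc, Finset.card_image_of_injective _ hE]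

end helpers

section card
variable {R : Type*} [CommRing R]

lemma aux_card_sum_X_mul {N t : ℕ} (F : Fin t → MvPolynomial (Fin (N + 1)) R) :
    (∑ i : Fin t, (X (Sum.inr i) : MvPolynomial (Fin (N + 1) ⊕ Fin t) R)
        * rename Sum.inl (F i)).support.card
      = ∑ i : Fin t, (F i).support.card := by
  classical
  set E : ((_ : Fin t) × (Fin (N + 1) →₀ ℕ)) → (Fin (N + 1) ⊕ Fin t →₀ ℕ) :=
    fun p => Finsupp.single (Sum.inr p.1) 1 + Finsupp.mapDomain Sum.inl p.2 with hEdef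
  have hmap0 : ∀ (m : Fin (N + 1) →₀ ℕ) (j : Fin t),
      Finsupp.mapDomain Sum.inl m (Sum.inr j) = 0 := by
    intro m j
    exact Finsupp.mapDomain_notin_range m _ (by simp)
  have hEinj : Function.Injective E := by
    rintro ⟨i, m⟩ ⟨j, m'⟩ h
    simp only [hEdef] at h
    have hij : i = j := by
      by_contra hne
      have h1 := DFunLike.congr_fun h (Sum.inr j)
      simp [Finsupp.single_apply, hmap0, Sum.inr.injEq, hne] at h1
    subst hij
    have h2 : Finsupp.mapDomain Sum.inl m = Finsupp.mapDomain Sum.inl m' :=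
      add_left_cancel h
    have h3 := Finsupp.mapDomain_injective Sum.inl_injective h2
    simp [h3]
  have hterm : ∀ i : Fin t, (X (Sum.inr i) : MvPolynomial (Fin (N + 1) ⊕ Fin t) R)
      * rename Sum.inl (F i)
      = ∑ m ∈ (F i).support, monomial (E ⟨i, m⟩) (coeff m (F i)) := by
    intro i
    conv_lhs => rw [(F i).as_sum]
    rw [map_sum, Finset.mul_sum]
    refine Finset.sum_congr rfl fun m hm => ?_
    rw [rename_monomial,
      show (X (Sum.inr i) : MvPolynomial (Fin (N + 1) ⊕ Fin t) R)
        = monomial (Finsupp.single (Sum.inr i) 1) 1 from rfl,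
      monomial_mul, one_mul]
  calc (∑ i : Fin t, (X (Sum.inr i) : MvPolynomial (Fin (N + 1) ⊕ Fin t) R)
        * rename Sum.inl (F i)).support.card
      = (∑ p ∈ (Finset.univ.sigma fun i => (F i).support),
          (monomial (E p) (coeff p.2 (F p.1)) : MvPolynomial (Fin (N + 1) ⊕ Fin t) R)).support.card := by
        rw [Finset.sum_sigma]
        exact congrArg (fun p : MvPolynomial (Fin (N + 1) ⊕ Fin t) R => p.support.card)
          (Finset.sum_congr rfl fun i _ => hterm i)
    _ = (Finset.univ.sigma fun i => (F i).support).card := by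
        refine aux_card_support_sum_monomial E hEinj _ _ fun p hp => ?_
        rw [Finset.mem_sigma] at hp
        exact (mem_support_iff).1 hp.2
    _ = ∑ i : Fin t, (F i).support.card := Finset.card_sigma _ _

end card

section linear
variable {R : Type*} [CommRing R]

lemma aux_monom_of_sum_le_one {ι : Type*} (m : ι →₀ ℕ) (h : (m.sum fun _ n => n) ≤ 1) :
    m = 0 ∨ ∃ k, m = Finsupp.single k 1 := by
  classical
  by_cases h0 : m = 0
  · exact Or.inl h0
  right
  obtain ⟨k, hk⟩ : ∃ k, m k ≠ 0 := by
    by_contra hc; push_neg at hc; exact h0 (Finsupp.ext fun k => hc k)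
  refine ⟨k, ?_⟩
  have hks : k ∈ m.support := Finsupp.mem_support_iff.2 hk
  have h : ∑ x ∈ m.support, m x ≤ 1 := h
  have hle : ∀ k', k' ≠ k → m k' = 0 := by
    intro k' hk'
    by_contra hc
    have hk's : k' ∈ m.support := Finsupp.mem_support_iff.2 hc
    have h2 : 2 ≤ ∑ x ∈ m.support, m x := by
      have hsub : ({k, k'} : Finset ι) ⊆ m.support := by
        intro x hx
        simp only [Finset.mem_insert, Finset.mem_singleton] at hx
        rcases hx with rfl | rfl <;> assumption
      calc 2 ≤ m k + m k' := by omega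
        _ = ∑ x ∈ ({k, k'} : Finset ι), m x := by rw [Finset.sum_pair (Ne.symm hk')]
        _ ≤ ∑ x ∈ m.support, m x := Finset.sum_le_sum_of_subset hsub
    exact absurd (le_trans h2 h) (by omega)
  have hmk : m k = 1 := by
    have h3 : m k ≤ ∑ x ∈ m.support, m x :=
      Finset.single_le_sum (f := fun x => m x) (fun _ _ => Nat.zero_le _) hks
    have h4 := le_trans h3 h
    omega
  ext k'
  by_cases hk' : k' = k
  · subst hk'; simp [hmk]
  · rw [hle k' hk', Finsupp.single_eq_of_ne' (Ne.symm hk')]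

lemma aux_dec {ι : Type*} [Fintype ι] [DecidableEq ι] (f : MvPolynomial ι R)
    (hf : f.totalDegree ≤ 1) :
    f = C (coeff 0 f) + ∑ k : ι, C (coeff (Finsupp.single k 1) f) * X k := by
  apply MvPolynomial.ext
  intro m
  rw [coeff_add, coeff_C, coeff_sum]
  simp only [coeff_C_mul, coeff_X']
  by_cases h0 : m = 0
  · subst h0
    rw [if_pos rfl]
    have hs : ∀ k : ι, ¬ (Finsupp.single k 1 = (0 : ι →₀ ℕ)) := fun k h =>
      one_ne_zero (α := ℕ) (Finsupp.single_eq_zero.1 h)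
    simp [hs]
  · rw [if_neg (fun h => h0 h.symm)]
    rcases em (∃ k, m = Finsupp.single k 1) with ⟨k0, rfl⟩ | hm
    · rw [Finset.sum_eq_single k0]
      · simp
      · intro k _ hk
        rw [if_neg, mul_zero]
        exact fun hsingle =>
          hk (Finsupp.single_left_injective (one_ne_zero (α := ℕ)) hsingle)
      · simp
    · have hcoeff : coeff m f = 0 := by
        by_contra hc
        rcases aux_monom_of_sum_le_one m
            (le_trans (le_totalDegree (mem_support_iff.2 hc)) hf) with rfl | ⟨k, rfl⟩
        · exact h0 rfl
        · exact hm ⟨k, rfl⟩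
      rw [hcoeff, Finset.sum_eq_zero, zero_add]
      intro k _
      rw [if_neg, mul_zero]
      exact fun h => hm ⟨k, h.symm⟩

noncomputable def tau {ι : Type*} (b : ι → R) :
    MvPolynomial ι R →ₐ[R] MvPolynomial ι R :=
  aeval (fun k => X k + C (b k))

lemma tau_X {ι : Type*} (b : ι → R) (k : ι) : tau b (X k) = X k + C (b k) :=
  aeval_X _ _

lemma tau_C {ι : Type*} (b : ι → R) (r : R) : tau b (C r) = C r := by
  simp [tau, algHom_C]

lemma tau_linear {ι : Type*} [Fintype ι] [DecidableEq ι] (b : ι → R)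
    (f : MvPolynomial ι R) (hf : f.totalDegree ≤ 1) :
    tau b f = f + C (eval b f - coeff 0 f) := by
  have hdec := aux_dec f hf
  have heval : eval b f = coeff 0 f + ∑ k : ι, coeff (Finsupp.single k 1) f * b k := by
    conv_lhs => rw [hdec]
    simp
  calc tau b f
      = C (coeff 0 f) + ∑ k : ι, C (coeff (Finsupp.single k 1) f) * (X k + C (b k)) := by
        conv_lhs => rw [hdec]
        rw [map_add, map_sum, tau_C]
        refine congrArg _ (Finset.sum_congr rfl fun k _ => ?_)
        rw [map_mul, tau_C, tau_X]
    _ = (C (coeff 0 f) + ∑ k : ι, C (coeff (Finsupp.single k 1) f) * X k)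
        + ∑ k : ι, C (coeff (Finsupp.single k 1) f * b k) := by
        rw [add_assoc, ← Finset.sum_add_distrib]
        refine congrArg _ (Finset.sum_congr rfl fun k _ => ?_)
        rw [mul_add, ← C_mul]
    _ = f + C (eval b f - coeff 0 f) := by
        rw [heval, add_sub_cancel_left, ← hdec, map_sum C]

end linear

section quad
variable {R : Type*} [CommRing R]

lemma aux_card_quad {n : ℕ} (γ : R) (hγ0 : γ ≠ 0) (q' e' : Fin n) (hqe : q' ≠ e')
    (d : Fin n → R) (hd : ∀ k, d k ≠ 0) :
    ((monomial (Finsupp.single q' 1 + Finsupp.single e' 1) (-γ) : MvPolynomial (Fin n) R)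
      + ∑ k : Fin n, monomial (Finsupp.single k 1) (d k)).support.card = n + 1 := by
  classical
  have heq : e' ≠ q' := Ne.symm hqe
  set E : Option (Fin n) → (Fin n →₀ ℕ) :=
    fun x => x.elim (Finsupp.single q' 1 + Finsupp.single e' 1)
      (fun k => Finsupp.single k 1) with hEdef
  have hμs : ∀ k : Fin n,
      Finsupp.single q' 1 + Finsupp.single e' 1 ≠ Finsupp.single k 1 := by
    intro k h
    have hq : Finsupp.single k 1 q' = 1 := by
      rw [← h, Finsupp.add_apply, Finsupp.single_eq_same, Finsupp.single_eq_of_ne' heq]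
      exact add_zero 1
    have he : Finsupp.single k 1 e' = 1 := by
      rw [← h, Finsupp.add_apply, Finsupp.single_eq_of_ne' hqe, Finsupp.single_eq_same]
    have hkq : k = q' := by
      by_contra hne; rw [Finsupp.single_eq_of_ne' hne] at hq; exact one_ne_zero hq.symm
    have hke : k = e' := by
      by_contra hne; rw [Finsupp.single_eq_of_ne' hne] at he; exact one_ne_zero he.symm
    exact hqe (hkq ▸ hke)
  have hEinj : Function.Injective E := by
    rintro (_ | x) (_ | y) h
    · rfl
    · exact absurd h (hμs y)
    · exact absurd h.symm (hμs x)
    · exact congrArg some (Finsupp.single_left_injective (one_ne_zero (α := ℕ)) h)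
  have hrw : (monomial (Finsupp.single q' 1 + Finsupp.single e' 1) (-γ)
        : MvPolynomial (Fin n) R) + ∑ k : Fin n, monomial (Finsupp.single k 1) (d k)
      = ∑ x : Option (Fin n), monomial (E x) (x.elim (-γ) d) := by
    rw [Fintype.sum_option]
    rfl
  rw [hrw, aux_card_support_sum_monomial E hEinj _ _ ?_]
  · simp
  · rintro (_ | x) _
    · exact neg_ne_zero.2 hγ0
    · exact hd x
end quad



/-- The polynomial `P_S = w_1·g_1 + Σ_{i=2}^t w_i·(γ·g_i + Σ_{k=0}^N x_k)` of the paper,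
in the variables `x_0,…,x_N` (indexed by `Fin (N+1)`, via `Sum.inl`) and `w_1,…,w_t`
(indexed by `Fin t`, via `Sum.inr`); each `g_i ∈ R[x_1,…,x_N]` is viewed in
`R[x_0,…,x_N]` via the renaming `Fin.succ`. -/
noncomputable def PS {R : Type*} [CommRing R] (N t : ℕ) (ht : 0 < t) (γ : R)
    (g : Fin t → MvPolynomial (Fin N) R) : MvPolynomial (Fin (N + 1) ⊕ Fin t) R :=
  X (Sum.inr ⟨0, ht⟩) * rename (Sum.inl ∘ Fin.succ) (g ⟨0, ht⟩)
    + ∑ i ∈ Finset.univ.filter (fun i : Fin t => i ≠ ⟨0, ht⟩),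
        X (Sum.inr i) *
          (C γ * rename (Sum.inl ∘ Fin.succ) (g i) + ∑ k : Fin (N + 1), X (Sum.inl k))

/-- Shift only the `x`-variables by `a`, leaving the `w`-variables unshifted. -/
noncomputable def shiftX {R : Type*} [CommRing R] {N t : ℕ} (a : Fin (N + 1) → R)
    (f : MvPolynomial (Fin (N + 1) ⊕ Fin t) R) : MvPolynomial (Fin (N + 1) ⊕ Fin t) R :=
  aeval (Sum.elim (fun k => X (Sum.inl k) + C (a k)) (fun j => X (Sum.inr j)) :
    Fin (N + 1) ⊕ Fin t → MvPolynomial (Fin (N + 1) ⊕ Fin t) R) f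

section bridge
variable {R : Type*} [CommRing R]

lemma shiftX_rename {N t : ℕ} (b : Fin (N + 1) → R) (p : MvPolynomial (Fin (N + 1)) R) :
    shiftX (t := t) b (rename Sum.inl p) = rename Sum.inl (tau b p) := by
  rw [shiftX, aeval_rename, tau, comp_aeval_apply]
  have hfun : ((Sum.elim (fun k => (X (Sum.inl k) : MvPolynomial (Fin (N + 1) ⊕ Fin t) R)
        + C (b k)) fun j => X (Sum.inr j)) ∘ Sum.inl)
      = fun i => (rename (Sum.inl : Fin (N + 1) → Fin (N + 1) ⊕ Fin t)) (X i + C (b i)) := by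
    funext k
    simp
  rw [hfun]

lemma shiftX_X_inr {N t : ℕ} (b : Fin (N + 1) → R) (j : Fin t) :
    shiftX b (X (Sum.inr j) : MvPolynomial (Fin (N + 1) ⊕ Fin t) R) = X (Sum.inr j) := by
  rw [shiftX, aeval_X]
  rfl

end bridge


/-- **Lemma 3.4(3):** let `R` be an integral domain, `γ ∈ R` nonzero and not a unit,
`N, t ≥ 1`, `g_1` affine linear with nonzero constant term, and each `g_i` (`i ≥ 2`)
either a quadratic binomial `x_p − x_q·x_e` (with `p, q, e` pairwise distinct) or a
nonzero homogeneous linear polynomial. If `a ∈ R^N` is a common zero of `g_1,…,g_t` and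
`a' ∈ R^{N+1}` extends `a` with `a'_0 = −(a_1 + ⋯ + a_N)`, then the sparsity of
`P_S(X″+a', W)` is exactly one less than the sparsity of `P_S`. -/
theorem sparsity_PS_shift_of_solution {R : Type*} [CommRing R] [IsDomain R]
    (γ : R) (hγ0 : γ ≠ 0) (hγ : ¬ IsUnit γ)
    (N t : ℕ) (hN : 1 ≤ N) (ht : 0 < t)
    (g : Fin t → MvPolynomial (Fin N) R)
    (hg1deg : (g ⟨0, ht⟩).totalDegree ≤ 1)
    (hg1const : coeff 0 (g ⟨0, ht⟩) ≠ 0)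
    (hgi : ∀ i : Fin t, i ≠ ⟨0, ht⟩ →
      (∃ p q e : Fin N, p ≠ q ∧ p ≠ e ∧ q ≠ e ∧ g i = X p - X q * X e)
        ∨ (g i ≠ 0 ∧ (g i).IsHomogeneous 1))
    (a : Fin N → R) (ha : ∀ i, eval a (g i) = 0) :
    (shiftX (Fin.cons (-(∑ i, a i)) a) (PS N t ht γ g)).support.card + 1
      = (PS N t ht γ g).support.card := by
  classical
  set b : Fin (N + 1) → R := Fin.cons (-(∑ i, a i)) a with hb
  have hbsucc : ∀ k : Fin N, b k.succ = a k := fun k => Fin.cons_succ _ _ _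
  have hbfun : b ∘ Fin.succ = a := funext hbsucc
  have hbsum : ∑ k, b k = 0 := by
    rw [hb, Fin.sum_cons]
    ring
  set F : Fin t → MvPolynomial (Fin (N + 1)) R := fun i =>
    if i = ⟨0, ht⟩ then rename Fin.succ (g ⟨0, ht⟩)
    else C γ * rename Fin.succ (g i) + ∑ k : Fin (N + 1), X k with hF
  -- Step 1 : PS as a uniform sum
  have hPS : PS N t ht γ g = ∑ i : Fin t, X (Sum.inr i) * rename Sum.inl (F i) := by
    rw [← Finset.add_sum_erase _ _ (Finset.mem_univ (⟨0, ht⟩ : Fin t))]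
    unfold PS
    rw [← Finset.filter_ne']
    congr 1
    · simp only [hF]
      rw [if_pos trivial, rename_rename]
    · refine Finset.sum_congr rfl fun i hi => ?_
      rw [Finset.mem_filter] at hi
      simp only [hF]
      simp only [if_neg hi.2]
      rw [map_add, map_mul, rename_C, rename_rename, map_sum]
      simp only [rename_X]
  -- Step 2 : the shift of PS
  have hshift : shiftX b (PS N t ht γ g)
      = ∑ i : Fin t, X (Sum.inr i) * rename Sum.inl (tau b (F i)) := by
    rw [hPS, shiftX, map_sum]
    refine Finset.sum_congr rfl fun i _ => ?_
    rw [map_mul]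
    congr 1
    · exact shiftX_X_inr b i
    · exact shiftX_rename b (F i)
  rw [hshift, hPS, aux_card_sum_X_mul, aux_card_sum_X_mul]
  -- Step 3 : termwise comparison
  rw [← Finset.add_sum_erase _ (fun i => (tau b (F i)).support.card)
        (Finset.mem_univ (⟨0, ht⟩ : Fin t)),
      ← Finset.add_sum_erase _ (fun i => (F i).support.card)
        (Finset.mem_univ (⟨0, ht⟩ : Fin t))]
  have hrest : ∀ i ∈ Finset.univ.erase (⟨0, ht⟩ : Fin t),
      (tau b (F i)).support.card = (F i).support.card := by
    intro i hi
    have hii0 : i ≠ ⟨0, ht⟩ := (Finset.mem_erase.1 hi).1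
    have hFi0 : F i = C γ * rename Fin.succ (g i) + ∑ k : Fin (N + 1), X k := by
      simp only [hF, if_neg hii0]
    rcases hgi i hii0 with ⟨p, q, e, hpq, hpe, hqe, hgeq⟩ | ⟨hne, hhom⟩
    · -- quadratic case
      have hpq' : p.succ ≠ q.succ := fun h => hpq (Fin.succ_injective N h)
      have hpe' : p.succ ≠ e.succ := fun h => hpe (Fin.succ_injective N h)
      have hqe' : q.succ ≠ e.succ := fun h => hqe (Fin.succ_injective N h)
      have hgia : a p - a q * a e = 0 := by
        have h1 := ha i
        rw [hgeq] at h1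
        simpa using h1
      have hap : a p = a q * a e := by linear_combination hgia
      set d1 : Fin (N + 1) → R := fun k => (if k = p.succ then γ else 0) + 1 with hd1def
      set d2 : Fin (N + 1) → R := fun k =>
        (if k = p.succ then γ else 0) + (if k = q.succ then -(γ * a e) else 0)
          + (if k = e.succ then -(γ * a q) else 0) + 1 with hd2def
      have hv1p : d1 p.succ = γ + 1 := by
        show (if p.succ = p.succ then γ else 0) + 1 = γ + 1
        rw [if_pos rfl]
      have hv1o : ∀ k, k ≠ p.succ → d1 k = 1 := by
        intro k hk
        show (if k = p.succ then γ else 0) + 1 = 1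
        rw [if_neg hk, zero_add]
      have hgu : γ + 1 ≠ 0 := by
        intro h
        exact hγ (by rw [show γ = -1 by linear_combination h]; exact isUnit_one.neg)
      have hd1 : ∀ k, d1 k ≠ 0 := by
        intro k
        by_cases hk : k = p.succ
        · rw [hk, hv1p]; exact hgu
        · rw [hv1o k hk]; exact one_ne_zero
      have hv2p : d2 p.succ = γ + 1 := by
        show (((if p.succ = p.succ then γ else 0) + if p.succ = q.succ then -(γ * a e) else 0)
          + if p.succ = e.succ then -(γ * a q) else 0) + 1 = γ + 1
        rw [if_pos rfl, if_neg hpq', if_neg hpe', add_zero, add_zero]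
      have hv2q : d2 q.succ = -(γ * a e) + 1 := by
        show (((if q.succ = p.succ then γ else 0) + if q.succ = q.succ then -(γ * a e) else 0)
          + if q.succ = e.succ then -(γ * a q) else 0) + 1 = -(γ * a e) + 1
        rw [if_pos rfl, if_neg (Ne.symm hpq'), if_neg hqe', add_zero, zero_add]
      have hv2e : d2 e.succ = -(γ * a q) + 1 := by
        show (((if e.succ = p.succ then γ else 0) + if e.succ = q.succ then -(γ * a e) else 0)
          + if e.succ = e.succ then -(γ * a q) else 0) + 1 = -(γ * a q) + 1
        rw [if_pos rfl, if_neg (Ne.symm hpe'), if_neg (Ne.symm hqe'), add_zero, zero_add]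
      have hv2o : ∀ k, k ≠ p.succ → k ≠ q.succ → k ≠ e.succ → d2 k = 1 := by
        intro k h1 h2 h3
        show (((if k = p.succ then γ else 0) + if k = q.succ then -(γ * a e) else 0)
          + if k = e.succ then -(γ * a q) else 0) + 1 = 1
        rw [if_neg h1, if_neg h2, if_neg h3, add_zero, add_zero, zero_add]
      have hgu : γ + 1 ≠ 0 := by
        intro h
        exact hγ (by rw [show γ = -1 by linear_combination h]; exact isUnit_one.neg)
      have hd2 : ∀ k, d2 k ≠ 0 := by
        intro k
        by_cases hk1 : k = p.succ
        · rw [hk1, hv2p]; exact hgu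
        · by_cases hk2 : k = q.succ
          · rw [hk2, hv2q]
            intro h
            exact hγ (IsUnit.of_mul_eq_one (a := γ) (a e) (by linear_combination -h))
          · by_cases hk3 : k = e.succ
            · rw [hk3, hv2e]
              intro h
              exact hγ (IsUnit.of_mul_eq_one (a := γ) (a q) (by linear_combination -h))
            · rw [hv2o k hk1 hk2 hk3]; exact one_ne_zero
      have hmono : ∀ (k : Fin (N + 1)) (c : R),
          (monomial (Finsupp.single k 1) c : MvPolynomial (Fin (N + 1)) R) = C c * X k := by
        intro k c
        rw [show (X k : MvPolynomial (Fin (N + 1)) R)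
          = monomial (Finsupp.single k 1) 1 from rfl, C_mul_monomial, mul_one]
      have hmu : (monomial (Finsupp.single q.succ 1 + Finsupp.single e.succ 1) (-γ)
          : MvPolynomial (Fin (N + 1)) R) = C (-γ) * (X q.succ * X e.succ) := by
        rw [show (X q.succ : MvPolynomial (Fin (N + 1)) R)
            = monomial (Finsupp.single q.succ 1) 1 from rfl,
          show (X e.succ : MvPolynomial (Fin (N + 1)) R)
            = monomial (Finsupp.single e.succ 1) 1 from rfl,
          monomial_mul, C_mul_monomial, mul_one, mul_one]
      have hsumtau : (∑ k : Fin (N + 1), tau b (X k) : MvPolynomial (Fin (N + 1)) R)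
          = ∑ k : Fin (N + 1), X k := by
        rw [Finset.sum_congr rfl fun k _ => tau_X b k, Finset.sum_add_distrib,
          ← map_sum C b Finset.univ, hbsum, map_zero, add_zero]
      have hren : rename Fin.succ (X p - X q * X e : MvPolynomial (Fin N) R)
          = X p.succ - X q.succ * X e.succ := by
        rw [map_sub, map_mul, rename_X, rename_X, rename_X]
      have hFi : F i = monomial (Finsupp.single q.succ 1 + Finsupp.single e.succ 1) (-γ)
          + ∑ k : Fin (N + 1), monomial (Finsupp.single k 1) (d1 k) := by
        have hterm : ∀ k : Fin (N + 1),
            (monomial (Finsupp.single k 1) (d1 k) : MvPolynomial (Fin (N + 1)) R)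
            = (if k = p.succ then C γ * X k else 0) + X k := by
          intro k
          rw [hmono]
          by_cases hk : k = p.succ
          · rw [hk, hv1p, if_pos rfl, C_add, C_1, add_mul, one_mul]
          · rw [hv1o k hk, if_neg hk, zero_add, C_1, one_mul]
        rw [Finset.sum_congr rfl fun k _ => hterm k, Finset.sum_add_distrib,
          Finset.sum_ite_eq' Finset.univ p.succ (fun k => (C γ * X k : MvPolynomial (Fin (N + 1)) R)),
          if_pos (Finset.mem_univ _), hmu, hFi0, hgeq, hren]
        simp only [C_neg]
        ring
      have hτFi : tau b (F i)
          = monomial (Finsupp.single q.succ 1 + Finsupp.single e.succ 1) (-γ)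
            + ∑ k : Fin (N + 1), monomial (Finsupp.single k 1) (d2 k) := by
        have htauF : tau b (F i)
            = C γ * ((X p.succ + C (a p))
                - (X q.succ + C (a q)) * (X e.succ + C (a e)))
              + ∑ k : Fin (N + 1), X k := by
          rw [hFi0, hgeq, hren, map_add, map_mul, tau_C, map_sub, map_mul,
            tau_X, tau_X, tau_X, hbsucc, hbsucc, hbsucc, map_sum, hsumtau]
        have hterm : ∀ k : Fin (N + 1),
            (monomial (Finsupp.single k 1) (d2 k) : MvPolynomial (Fin (N + 1)) R)
            = ((if k = p.succ then C γ * X k else 0)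
                + (if k = q.succ then C (-(γ * a e)) * X k else 0)
                + (if k = e.succ then C (-(γ * a q)) * X k else 0)) + X k := by
          intro k
          rw [hmono]
          by_cases hk1 : k = p.succ
          · rw [hk1, hv2p, if_pos rfl, if_neg hpq', if_neg hpe']
            simp only [C_add, C_1]
            ring
          · by_cases hk2 : k = q.succ
            · rw [hk2, hv2q, if_neg (Ne.symm hpq'), if_pos rfl, if_neg hqe']
              simp only [C_add, C_1, C_neg, C_mul]
              ring
            · by_cases hk3 : k = e.succ
              · rw [hk3, hv2e, if_neg (Ne.symm hpe'), if_neg (Ne.symm hqe'), if_pos rfl]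
                simp only [C_add, C_1, C_neg, C_mul]
                ring
              · rw [hv2o k hk1 hk2 hk3, if_neg hk1, if_neg hk2, if_neg hk3, C_1, one_mul]
                ring
        rw [htauF, Finset.sum_congr rfl fun k _ => hterm k, Finset.sum_add_distrib,
          Finset.sum_add_distrib, Finset.sum_add_distrib,
          Finset.sum_ite_eq' Finset.univ p.succ (fun k => (C γ * X k : MvPolynomial (Fin (N + 1)) R)),
          Finset.sum_ite_eq' Finset.univ q.succ (fun k => (C (-(γ * a e)) * X k : MvPolynomial (Fin (N + 1)) R)),
          Finset.sum_ite_eq' Finset.univ e.succ (fun k => (C (-(γ * a q)) * X k : MvPolynomial (Fin (N + 1)) R)),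
          if_pos (Finset.mem_univ _), if_pos (Finset.mem_univ _), if_pos (Finset.mem_univ _),
          hmu, hap]
        simp only [C_neg, C_mul]
        ring
      rw [hτFi, hFi, aux_card_quad γ hγ0 q.succ e.succ hqe' d2 hd2,
        aux_card_quad γ hγ0 q.succ e.succ hqe' d1 hd1]
    · -- linear homogeneous case
      have hdeg : (F i).totalDegree ≤ 1 := by
        rw [hFi0]
        refine le_trans (totalDegree_add _ _) (max_le ?_ ?_)
        · refine le_trans (totalDegree_mul _ _) ?_
          rw [totalDegree_C, zero_add]
          exact le_trans (totalDegree_rename_le _ _) hhom.totalDegree_le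
        · refine le_trans (totalDegree_finset_sum _ _) ?_
          exact Finset.sup_le fun k _ => le_of_eq (totalDegree_X _)
      have heval : eval b (F i) = 0 := by
        rw [hFi0, eval_add, eval_mul, eval_C, eval_rename, hbfun, ha i, mul_zero, zero_add,
          map_sum]
        simpa using hbsum
      have hcoeff : coeff 0 (F i) = 0 := by
        have h1 : coeff 0 (rename Fin.succ (g i)) = coeff 0 (g i) := by
          have h2 := coeff_rename_mapDomain Fin.succ (Fin.succ_injective N) (g i) 0
          rwa [Finsupp.mapDomain_zero] at h2
        rw [hFi0, coeff_add, coeff_C_mul, h1,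
          hhom.coeff_eq_zero (by simp [map_zero]), mul_zero, zero_add, coeff_sum]
        simp [coeff_X']
      rw [tau_linear b (F i) hdeg, heval, hcoeff]
      simp
  rw [Finset.sum_congr rfl hrest]
  have hmain : (tau b (F ⟨0, ht⟩)).support.card + 1 = (F ⟨0, ht⟩).support.card := by
    have hF0 : F ⟨0, ht⟩ = rename Fin.succ (g ⟨0, ht⟩) := by simp only [hF]; simp
    have hdeg : (F ⟨0, ht⟩).totalDegree ≤ 1 := by
      rw [hF0]; exact le_trans (totalDegree_rename_le _ _) hg1deg
    have hcoeff : coeff 0 (F ⟨0, ht⟩) = coeff 0 (g ⟨0, ht⟩) := by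
      rw [hF0]
      have h2 := coeff_rename_mapDomain Fin.succ (Fin.succ_injective N) (g ⟨0, ht⟩) 0
      rwa [Finsupp.mapDomain_zero] at h2
    have heval : eval b (F ⟨0, ht⟩) = 0 := by
      rw [hF0, eval_rename, hbfun, ha]
    have htau : tau b (F ⟨0, ht⟩) = F ⟨0, ht⟩ - C (coeff 0 (g ⟨0, ht⟩)) := by
      rw [tau_linear b _ hdeg, heval, hcoeff, zero_sub, map_neg, ← sub_eq_add_neg]
    have hsupp : (tau b (F ⟨0, ht⟩)).support = (F ⟨0, ht⟩).support.erase 0 := by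
      rw [htau]
      ext m
      rw [Finset.mem_erase, mem_support_iff, mem_support_iff, coeff_sub, coeff_C]
      by_cases hm : m = 0
      · subst hm
        rw [if_pos rfl, hcoeff]
        simp
      · rw [if_neg (fun h => hm h.symm), sub_zero]
        exact ⟨fun h => ⟨hm, h⟩, fun h => h.2⟩
    rw [hsupp, Finset.card_erase_add_one]
    rw [mem_support_iff, hcoeff]
    exact hg1const
  omega
end

section
/- Let R be an integral domain, γ ∈ R a nonzero element that is not a unit, N ≥ 3, and p, q, e ∈ {1,…,N} pairwise distinct. Let a_0, a_1, …, a_N ∈ R satisfy a_0 + a_1 + ⋯ + a_N = 0 and a_p = a_q·a_e. Then the polynomial γ·(x_p − x_q·x_e) + Σ_{k=0}^N x_k and its shift γ·((x_p+a_p) − (x_q+a_q)·(x_e+a_e)) + Σ_{k=0}^N (x_k+a_k) have the same sparsity, namely N+2. -/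
open MvPolynomial

lemma my_support_sum_monomial {σ R ι : Type*} [CommSemiring R] [DecidableEq σ]
    (s : Finset ι) (d : ι → (σ →₀ ℕ)) (c : ι → R)
    (hd : Set.InjOn d s) (hc : ∀ i ∈ s, c i ≠ 0) :
    (∑ i ∈ s, monomial (d i) (c i)).support = s.image d := by
  ext m
  simp only [mem_support_iff, coeff_sum, coeff_monomial, Finset.mem_image]
  by_cases hm : ∃ i ∈ s, d i = m
  · obtain ⟨i₀, hi₀, rfl⟩ := hm
    rw [Finset.sum_eq_single i₀ (fun j hj hji => if_neg (fun h => hji (hd hj hi₀ h)))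
      (fun h => absurd hi₀ h), if_pos rfl]
    exact iff_of_true (hc i₀ hi₀) ⟨i₀, hi₀, rfl⟩
  · rw [Finset.sum_eq_zero (fun j hj => if_neg (fun h => hm ⟨j, hj, h⟩))]
    exact iff_of_false (by simp) hm

lemma key_shift {R : Type*} [CommRing R] [IsDomain R]
    (γ : R) (hγ0 : γ ≠ 0) (hγ : ¬ IsUnit γ)
    (N : ℕ) (p q e : Fin (N + 1))
    (hpq : p ≠ q) (hpe : p ≠ e) (hqe : q ≠ e)
    (a : Fin (N + 1) → R) (hsum : ∑ k, a k = 0) (hsol : a p = a q * a e) :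
    ((C γ * ((X p + C (a p)) - (X q + C (a q)) * (X e + C (a e)))
          + ∑ k, (X k + C (a k)) :
        MvPolynomial (Fin (N + 1)) R)).support.card = N + 2 := by
  classical
  set c : Option (Fin (N + 1)) → R := fun i =>
    Option.rec (-γ) (fun k => 1 + (if k = p then γ else 0) + (if k = q then -(γ * a e) else 0)
      + (if k = e then -(γ * a q) else 0)) i with hc
  set d : Option (Fin (N + 1)) → (Fin (N + 1) →₀ ℕ) := fun i =>
    Option.rec (Finsupp.single q 1 + Finsupp.single e 1) (fun k => Finsupp.single k 1) i with hd
  have hP : (C γ * ((X p + C (a p)) - (X q + C (a q)) * (X e + C (a e)))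
          + ∑ k, (X k + C (a k)) : MvPolynomial (Fin (N + 1)) R)
      = ∑ i : Option (Fin (N + 1)), monomial (d i) (c i) := by
    rw [Fintype.sum_option]
    have hm1 : ∀ k : Fin (N+1), (monomial (d (some k)) (c (some k)) : MvPolynomial (Fin (N+1)) R)
        = X k + (if k = p then C γ * X k else 0) + (if k = q then -(C γ * C (a e)) * X k else 0)
          + (if k = e then -(C γ * C (a q)) * X k else 0) := by
      intro k
      rw [hd, hc]
      simp only [← C_mul_X_eq_monomial]
      split_ifs <;> simp [map_mul] <;> ring
    have hXX : (X q * X e : MvPolynomial (Fin (N+1)) R)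
        = monomial (Finsupp.single q 1 + Finsupp.single e 1) 1 := by
      rw [X, X, monomial_mul, mul_one]
    have hm0 : (monomial (d none) (c none) : MvPolynomial (Fin (N+1)) R)
        = C (-γ) * (X q * X e) := by
      rw [hd, hc, hXX, C_mul_monomial, mul_one]
    rw [hm0]
    simp only [hm1]
    simp only [Finset.sum_add_distrib]
    rw [Finset.sum_ite_eq' Finset.univ p, Finset.sum_ite_eq' Finset.univ q,
      Finset.sum_ite_eq' Finset.univ e]
    simp only [Finset.mem_univ, if_true]
    rw [← map_sum, hsum, map_zero]
    simp only [map_mul, map_neg, hsol]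
    ring
  have hinj : Set.InjOn d (Finset.univ : Finset (Option (Fin (N+1)))) := by
    have hsing : ∀ k : Fin (N+1), d (some k) ≠ d none := by
      intro k h
      have h1 := DFunLike.congr_fun h q
      have h2 := DFunLike.congr_fun h e
      simp only [hd, Finsupp.add_apply, Finsupp.single_apply, if_pos rfl,
        if_neg (Ne.symm hqe), if_neg hqe] at h1 h2
      split_ifs at h1 h2 with hk1 hk2 <;> first | exact hqe (hk1 ▸ hk2) | omega
    rintro (_ | k) - (_ | l) - hij
    · rfl
    · exact absurd hij.symm (hsing l)
    · exact absurd hij (hsing k)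
    · exact congrArg some (Finsupp.single_left_injective one_ne_zero hij)
  have hA : (1 : R) + γ ≠ 0 := fun h =>
    hγ ((eq_neg_of_add_eq_zero_right h) ▸ isUnit_one.neg)
  have hB : (1 : R) + -(γ * a e) ≠ 0 := fun h => by
    have : γ * a e = 1 := by linear_combination -h
    exact hγ (IsUnit.of_mul_eq_one (a e) this)
  have hC : (1 : R) + -(γ * a q) ≠ 0 := fun h => by
    have : γ * a q = 1 := by linear_combination -h
    exact hγ (IsUnit.of_mul_eq_one (a q) this)
  have hcne : ∀ i ∈ (Finset.univ : Finset (Option (Fin (N+1)))), c i ≠ 0 := by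
    rintro (_ | k) -
    · simpa [hc] using hγ0
    · rw [hc]
      by_cases h1 : k = p
      · subst h1; simpa [hpq, hpe] using hA
      · by_cases h2 : k = q
        · subst h2; simpa [h1, hqe] using hB
        · by_cases h3 : k = e
          · subst h3; simpa [h1, h2] using hC
          · simp [h1, h2, h3]
  rw [hP, my_support_sum_monomial _ _ _ hinj hcne,
    Finset.card_image_of_injOn hinj, Finset.card_univ, Fintype.card_option, Fintype.card_fin]

/-- **Key computation in the proof of Lemma 3.4(3):** let `R` be an integral domain,
`γ ∈ R` nonzero and not a unit, `N ≥ 3`, and `p, q, e ∈ {1,…,N}` pairwise distinct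
(viewed as nonzero indices of the variables `x_0,…,x_N`). If `a_0,…,a_N ∈ R` satisfy
`a_0 + ⋯ + a_N = 0` and `a_p = a_q·a_e`, then the polynomial
`γ·(x_p − x_q·x_e) + Σ_{k=0}^N x_k` and its shift by `a` have the same sparsity,
namely `N + 2`. -/
theorem sparsity_quadratic_summand_shift {R : Type*} [CommRing R] [IsDomain R]
    (γ : R) (hγ0 : γ ≠ 0) (hγ : ¬ IsUnit γ)
    (N : ℕ) (hN : 3 ≤ N) (p q e : Fin (N + 1))
    (hp : p ≠ 0) (hq : q ≠ 0) (he : e ≠ 0)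
    (hpq : p ≠ q) (hpe : p ≠ e) (hqe : q ≠ e)
    (a : Fin (N + 1) → R) (hsum : ∑ k, a k = 0) (hsol : a p = a q * a e) :
    ((C γ * (X p - X q * X e) + ∑ k, X k :
        MvPolynomial (Fin (N + 1)) R)).support.card = N + 2
    ∧ ((C γ * ((X p + C (a p)) - (X q + C (a q)) * (X e + C (a e)))
          + ∑ k, (X k + C (a k)) :
        MvPolynomial (Fin (N + 1)) R)).support.card = N + 2 := by
  constructor
  · have := key_shift γ hγ0 hγ N p q e hpq hpe hqe (fun _ => 0) (by simp) (by simp)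
    simpa using this
  · exact key_shift γ hγ0 hγ N p q e hpq hpe hqe a hsum hsol
end

section
/- Let b = (b_0, b_1, …, b_N) ∈ R^{N+1} satisfy b_0 = −(b_1 + ⋯ + b_N), and suppose the sparsity of P_S(X″+b, W) (shift only the x-variables by b, leaving the w-variables unshifted) is strictly less than the sparsity of P_S. Then (b_1,…,b_N) ∈ R^N is a common zero of g_1, g_2, …, g_t. -/
open MvPolynomial

section Aux
variable {R : Type*} [CommRing R] {σ : Type*}

lemma exp_le_one (m : σ →₀ ℕ) (h : m.sum (fun _ e => e) ≤ 1) :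
    m = 0 ∨ ∃ k, m = Finsupp.single k 1 := by
  classical
  rcases eq_or_ne m 0 with h0 | h0
  · exact Or.inl h0
  · right
    obtain ⟨k, hk⟩ : ∃ k, m k ≠ 0 := by
      by_contra hc
      push_neg at hc
      exact h0 (Finsupp.ext fun a => hc a)
    refine ⟨k, Finsupp.ext fun a => ?_⟩
    have hks : k ∈ m.support := Finsupp.mem_support_iff.mpr hk
    by_cases hak : a = k
    · subst hak
      have h1 : m a ≤ m.sum (fun _ e => e) := by
        rw [Finsupp.sum]
        exact Finset.single_le_sum (fun i _ => Nat.zero_le _) hks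
      have := le_trans h1 h
      simp [Finsupp.single_eq_same]
      omega
    · rw [Finsupp.single_eq_of_ne' (Ne.symm hak)]
      by_cases has : a ∈ m.support
      · exfalso
        have hsub : {k, a} ⊆ m.support := by
          intro x hx
          simp at hx
          rcases hx with rfl | rfl <;> assumption
        have : m k + m a ≤ m.sum (fun _ e => e) := by
          rw [Finsupp.sum]
          calc m k + m a = ∑ x ∈ ({k, a} : Finset σ), m x := by
                rw [Finset.sum_pair (Ne.symm hak)]
            _ ≤ _ := Finset.sum_le_sum_of_subset hsub
        have hma : m a ≠ 0 := Finsupp.mem_support_iff.mp has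
        omega
      · exact Finsupp.notMem_support_iff.mp has

noncomputable def shift1 (b : σ → R) (h : MvPolynomial σ R) : MvPolynomial σ R :=
  aeval (fun k => X k + C (b k)) h

lemma coeff_zero_shift1 (b : σ → R) (h : MvPolynomial σ R) :
    coeff 0 (shift1 b h) = eval b h := by
  rw [← constantCoeff_eq]
  induction h using MvPolynomial.induction_on with
  | C a => simp [shift1]
  | add p q hp hq => simp only [shift1, map_add] at *; rw [hp, hq]
  | mul_X p k hp =>
      simp only [shift1, map_mul, aeval_X, map_add, eval_mul, eval_X,
        constantCoeff_X, constantCoeff_C] at *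
      rw [hp]; ring

end Aux

section Aux2
variable {R : Type*} [CommRing R] {σ : Type*}

lemma shift1_of_deg_le_one (b : σ → R) (h : MvPolynomial σ R)
    (hdeg : h.totalDegree ≤ 1) :
    shift1 b h = h + C (eval b h - coeff 0 h) := by
  classical
  have key : ∀ m ∈ h.support, shift1 b (monomial m (coeff m h)) =
      monomial m (coeff m h)
        + C (eval b (monomial m (coeff m h)) - coeff 0 (monomial m (coeff m h))) := by
    intro m hm
    rcases exp_le_one m (le_trans (le_totalDegree hm) hdeg) with rfl | ⟨k, rfl⟩
    · simp [shift1]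
    · rw [shift1, aeval_monomial, Finsupp.prod_single_index (by simp), pow_one,
        eval_monomial, Finsupp.prod_single_index (by simp), pow_one,
        coeff_monomial, if_neg (by simp [Finsupp.single_eq_zero] :
          ¬ ((Finsupp.single k 1 : σ →₀ ℕ) = 0)),
        monomial_eq, Finsupp.prod_single_index (by simp), pow_one, algebraMap_eq]
      rw [sub_zero, mul_add, ← C_mul]
  have step : shift1 b h = ∑ m ∈ h.support, shift1 b (monomial m (coeff m h)) := by
    rw [shift1]
    conv_lhs => rw [h.as_sum]
    rw [map_sum]
    rfl
  rw [step, Finset.sum_congr rfl key, Finset.sum_add_distrib, ← map_sum C]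
  congr 1
  · exact (h.as_sum).symm
  · congr 1
    rw [Finset.sum_sub_distrib]
    congr 1
    · rw [← map_sum (eval b)]
      congr 1
      exact (h.as_sum).symm
    · rw [← MvPolynomial.coeff_sum]
      congr 1
      exact (h.as_sum).symm

end Aux2

section Aux3
open scoped Classical
variable {R : Type*} [CommRing R] {σ : Type*}

lemma card_support_split (f : MvPolynomial σ R) :
    f.support.card = (f.support.erase 0).card + (if coeff 0 f ≠ 0 then 1 else 0) := by
  classical
  by_cases h0 : coeff 0 f = 0
  · rw [if_neg (by simpa using h0), Finset.erase_eq_of_notMem (by simp [mem_support_iff, h0]),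
      add_zero]
  · rw [if_pos (by simpa using h0), ← Finset.card_erase_add_one (mem_support_iff.mpr h0)]

/-- master counting lemma -/
lemma card_shift1_eq (b : σ → R) (h : MvPolynomial σ R)
    (hsupp : (shift1 b h).support.erase 0 = h.support.erase 0) :
    (shift1 b h).support.card + (if coeff 0 h ≠ 0 then 1 else 0)
      = h.support.card + (if eval b h ≠ 0 then 1 else 0) := by
  rw [card_support_split (shift1 b h), card_support_split h, hsupp, coeff_zero_shift1]
  omega

lemma erase_support_add_C (h : MvPolynomial σ R) (a : R) :
    ((h + C a).support.erase 0) = h.support.erase 0 := by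
  classical
  ext m
  simp only [Finset.mem_erase, mem_support_iff, coeff_add, ne_eq]
  constructor
  · rintro ⟨hm, hc⟩
    refine ⟨hm, ?_⟩
    rwa [coeff_C, if_neg (Ne.symm hm), add_zero] at hc
  · rintro ⟨hm, hc⟩
    refine ⟨hm, ?_⟩
    rwa [coeff_C, if_neg (Ne.symm hm), add_zero]

lemma card_shift1_deg_le_one (b : σ → R) (h : MvPolynomial σ R) (hdeg : h.totalDegree ≤ 1) :
    (shift1 b h).support.card + (if coeff 0 h ≠ 0 then 1 else 0)
      = h.support.card + (if eval b h ≠ 0 then 1 else 0) := by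
  apply card_shift1_eq
  rw [shift1_of_deg_le_one b h hdeg]
  exact erase_support_add_C h _

end Aux3

section Aux4
open scoped Classical
variable {R : Type*} [CommRing R] {σ : Type*} [Fintype σ]

lemma coeff_single_sum_X (Q : σ) :
    coeff (Finsupp.single Q 1) (∑ k : σ, X k : MvPolynomial σ R) = 1 := by
  classical
  rw [MvPolynomial.coeff_sum]
  have : ∀ k : σ, coeff (Finsupp.single Q 1) (X k : MvPolynomial σ R)
      = if k = Q then 1 else 0 := by
    intro k
    rw [coeff_X']
    congr 1
    simp [Finsupp.single_left_inj (one_ne_zero)]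
  rw [Finset.sum_congr rfl (fun k _ => this k), Finset.sum_ite_eq' Finset.univ Q (fun _ => 1),
    if_pos (Finset.mem_univ Q)]

lemma quad_erase_support [Nontrivial R] (γ : R) (hγ : ¬ IsUnit γ) (b : σ → R)
    (P Q E : σ) (hPQ : P ≠ Q) (hPE : P ≠ E) (hQE : Q ≠ E) :
    (shift1 b (C γ * (X P - X Q * X E) + ∑ k : σ, X k)).support.erase 0
      = (C γ * (X P - X Q * X E) + ∑ k : σ, X k :
          MvPolynomial σ R).support.erase 0 := by
  classical
  have hsingle : ∀ a a' : σ, a ≠ a' → (Finsupp.single a 1 : σ →₀ ℕ) ≠ Finsupp.single a' 1 :=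
    fun a a' hne hc => hne ((Finsupp.single_left_inj one_ne_zero).mp hc)
  have hs0 : ∀ a : σ, (0 : σ →₀ ℕ) ≠ Finsupp.single a 1 := fun a hc =>
    (one_ne_zero (α := ℕ)) (by simpa [Finsupp.single_eq_zero] using hc.symm)
  set h : MvPolynomial σ R := C γ * (X P - X Q * X E) + ∑ k : σ, X k with hh
  set c : R := γ * (b P - b Q * b E) + ∑ k : σ, b k with hc
  set D : MvPolynomial σ R := C (-(γ * b E)) * X Q + C (-(γ * b Q)) * X E + C c with hD
  have hshift : shift1 b h = h + D := by
    rw [shift1, hh, hD, hc]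
    simp only [map_add, map_mul, map_sub, map_neg, aeval_X, aeval_C, map_sum,
      algebraMap_eq, Finset.sum_add_distrib]
    ring
  have hcoeffQ : coeff (Finsupp.single Q 1) h = 1 := by
    rw [hh, coeff_add, coeff_C_mul, coeff_sub, coeff_X', if_neg (by
      simp [Finsupp.single_left_inj (one_ne_zero : (1:ℕ) ≠ 0), hPQ]),
      coeff_mul_X' (Finsupp.single Q 1) E (X Q), if_neg (by
      simp [Finsupp.single_apply, hQE, Ne.symm hQE]), coeff_single_sum_X]
    ring
  have hcoeffE : coeff (Finsupp.single E 1) h = 1 := by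
    rw [hh, coeff_add, coeff_C_mul, coeff_sub, coeff_X', if_neg (by
      simp [Finsupp.single_left_inj (one_ne_zero : (1:ℕ) ≠ 0), hPE]),
      coeff_mul_X' (Finsupp.single E 1) E (X Q), if_pos (by simp), coeff_single_sum_X]
    have h0 : (Finsupp.single E 1 - Finsupp.single E 1 : σ →₀ ℕ) = 0 := by simp
    rw [h0, coeff_X', if_neg (by simp [Finsupp.single_eq_zero])]
    ring
  ext m
  simp only [Finset.mem_erase, mem_support_iff, ne_eq]
  by_cases hm0 : m = 0
  · simp [hm0]
  · by_cases hmQ : m = Finsupp.single Q 1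
    · subst hmQ
      have hDQ : coeff (Finsupp.single Q 1) D = -(γ * b E) := by
        rw [hD, coeff_add, coeff_add, coeff_C_mul, coeff_X', if_pos rfl, coeff_C_mul,
          coeff_X', if_neg (hsingle E Q (Ne.symm hQE)),
          coeff_C, if_neg (hs0 Q)]
        ring
      have h1 : coeff (Finsupp.single Q 1) (shift1 b h) = 1 - γ * b E := by
        rw [hshift, coeff_add, hcoeffQ, hDQ]; ring
      have h2 : (1 : R) - γ * b E ≠ 0 := by
        intro hz
        exact hγ (IsUnit.of_mul_eq_one (b E) (by linear_combination -hz))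
      simp [h1, hcoeffQ, h2, hm0, one_ne_zero]
    · by_cases hmE : m = Finsupp.single E 1
      · subst hmE
        have hDE : coeff (Finsupp.single E 1) D = -(γ * b Q) := by
          rw [hD, coeff_add, coeff_add, coeff_C_mul, coeff_X', if_neg (hsingle Q E hQE),
            coeff_C_mul, coeff_X', if_pos rfl,
            coeff_C, if_neg (hs0 E)]
          ring
        have h1 : coeff (Finsupp.single E 1) (shift1 b h) = 1 - γ * b Q := by
          rw [hshift, coeff_add, hcoeffE, hDE]; ring
        have h2 : (1 : R) - γ * b Q ≠ 0 := by
          intro hz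
          exact hγ (IsUnit.of_mul_eq_one (b Q) (by linear_combination -hz))
        simp [h1, hcoeffE, h2, hm0, one_ne_zero]
      · have hDm : coeff m D = 0 := by
          rw [hD, coeff_add, coeff_add, coeff_C_mul, coeff_X',
            if_neg (fun hc => hmQ hc.symm), coeff_C_mul, coeff_X',
            if_neg (fun hc => hmE hc.symm), coeff_C, if_neg (fun hc => hm0 hc.symm)]
          ring
        have heq : coeff m (shift1 b h) = coeff m h := by
          rw [hshift, coeff_add, hDm, add_zero]
        simp [heq, hm0]

end Aux4

section Aux5
variable {R : Type*} [CommRing R] {σ τ : Type*}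

lemma mem_support_X_mul_rename [DecidableEq τ] {j : τ} {F : MvPolynomial σ R}
    {m : (σ ⊕ τ) →₀ ℕ} (hm : m ∈ (X (Sum.inr j) * rename Sum.inl F).support) :
    ∀ j' : τ, m (Sum.inr j') = if j' = j then 1 else 0 := by
  classical
  intro j'
  rw [support_X_mul] at hm
  obtain ⟨n, hn, rfl⟩ := Finset.mem_map.mp hm
  rw [support_rename_of_injective Sum.inl_injective] at hn
  obtain ⟨d, _, rfl⟩ := Finset.mem_image.mp hn
  have h1 : (Finsupp.mapDomain Sum.inl d) (Sum.inr j') = 0 :=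
    Finsupp.mapDomain_notin_range d (Sum.inr j') (by simp)
  simp only [addLeftEmbedding_apply, Finsupp.add_apply, h1, add_zero,
    Finsupp.single_apply]
  by_cases hj : j' = j
  · subst hj; simp
  · rw [if_neg hj, if_neg (fun h : Sum.inr j = Sum.inr j' => hj (Sum.inr.inj h).symm)]

lemma card_support_sum_X_mul_rename [DecidableEq τ] (s : Finset τ)
    (F : τ → MvPolynomial σ R) :
    (∑ j ∈ s, X (Sum.inr j) * rename Sum.inl (F j)).support.card
      = ∑ j ∈ s, (F j).support.card := by
  classical
  have hdisj : ∀ j₁ j₂ : τ, j₁ ≠ j₂ →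
      Disjoint (X (Sum.inr j₁) * rename Sum.inl (F j₁)).support
        (X (Sum.inr j₂) * rename Sum.inl (F j₂)).support := by
    intro j₁ j₂ hne
    rw [Finset.disjoint_left]
    intro m hm1 hm2
    have h1 := mem_support_X_mul_rename hm1 j₁
    have h2 := mem_support_X_mul_rename hm2 j₁
    rw [if_pos rfl] at h1
    rw [if_neg hne] at h2
    rw [h1] at h2
    exact one_ne_zero h2
  have hsupp : (∑ j ∈ s, X (Sum.inr j) * rename Sum.inl (F j)).support
      = s.biUnion fun j => (X (Sum.inr j) * rename Sum.inl (F j)).support :=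
    by simp only [support, AddMonoidAlgebra.coeff_sum]; exact Finsupp.support_sum_eq_biUnion s hdisj
  rw [hsupp, Finset.card_biUnion (fun j₁ _ j₂ _ h => hdisj j₁ j₂ h)]
  refine Finset.sum_congr rfl fun j _ => ?_
  rw [support_X_mul, Finset.card_map, support_rename_of_injective Sum.inl_injective,
    Finset.card_image_of_injective _ (Finsupp.mapDomain_injective Sum.inl_injective)]

lemma shiftX_sum_eq {R : Type*} [CommRing R] {N t : ℕ} (b : Fin (N + 1) → R)
    (s : Finset (Fin t)) (F : Fin t → MvPolynomial (Fin (N + 1)) R) :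
    shiftX b (∑ j ∈ s, X (Sum.inr j) * rename Sum.inl (F j))
      = ∑ j ∈ s, X (Sum.inr j) * rename Sum.inl (shift1 b (F j)) := by
  rw [shiftX, map_sum]
  refine Finset.sum_congr rfl fun j _ => ?_
  rw [map_mul, aeval_X, Sum.elim_inr, aeval_rename, shift1]
  congr 1
  rw [comp_aeval_apply]
  simp only [map_add, rename_X, rename_C]
  rfl

end Aux5


/-- **Lemma 3.5:** let `R` be an integral domain, `γ ∈ R` nonzero and not a unit,
`N, t ≥ 1`, `g_1` affine linear with nonzero constant term, and each `g_i` (`i ≥ 2`)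
either a quadratic binomial `x_p − x_q·x_e` (with `p, q, e` pairwise distinct) or a
nonzero homogeneous linear polynomial. If `b = (b_0,…,b_N) ∈ R^{N+1}` satisfies
`b_0 = −(b_1 + ⋯ + b_N)` and shifting the `x`-variables of `P_S` by `b` strictly
decreases the sparsity, then `(b_1,…,b_N)` is a common zero of `g_1,…,g_t`. -/
theorem solution_of_sparsifying_shift {R : Type*} [CommRing R] [IsDomain R]
    (γ : R) (hγ0 : γ ≠ 0) (hγ : ¬ IsUnit γ)
    (N t : ℕ) (hN : 1 ≤ N) (ht : 0 < t)
    (g : Fin t → MvPolynomial (Fin N) R)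
    (hg1deg : (g ⟨0, ht⟩).totalDegree ≤ 1)
    (hg1const : coeff 0 (g ⟨0, ht⟩) ≠ 0)
    (hgi : ∀ i : Fin t, i ≠ ⟨0, ht⟩ →
      (∃ p q e : Fin N, p ≠ q ∧ p ≠ e ∧ q ≠ e ∧ g i = X p - X q * X e)
        ∨ (g i ≠ 0 ∧ (g i).IsHomogeneous 1))
    (b : Fin (N + 1) → R) (hb : b 0 = -(∑ i : Fin N, b i.succ))
    (hsp : (shiftX b (PS N t ht γ g)).support.card < (PS N t ht γ g).support.card) :
    ∀ i, eval (fun k : Fin N => b k.succ) (g i) = 0 := by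
  classical
  set z : Fin t := ⟨0, ht⟩ with hz
  set ev : Fin t → R := fun j => eval (fun k : Fin N => b k.succ) (g j) with hev
  set H : Fin t → MvPolynomial (Fin (N + 1)) R := fun j =>
    if j = z then rename Fin.succ (g j)
    else C γ * rename Fin.succ (g j) + ∑ k : Fin (N + 1), X k with hH
  have hbsum : ∑ k : Fin (N + 1), b k = 0 := by
    rw [Fin.sum_univ_succ, hb, neg_add_cancel]
  have hHz : H z = rename Fin.succ (g z) := by simp [hH]
  have hHne : ∀ j : Fin t, j ≠ z →
      H j = C γ * rename Fin.succ (g j) + ∑ k : Fin (N + 1), X k := by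
    intro j hj
    simp only [hH]
    exact if_neg hj
  -- PS as a sum over all of `Fin t`
  have hPS : PS N t ht γ g = ∑ j : Fin t, X (Sum.inr j) * rename Sum.inl (H j) := by
    rw [PS, ← Finset.add_sum_erase Finset.univ _ (Finset.mem_univ z), ← Finset.filter_ne']
    congr 1
    · rw [hHz, rename_rename]
    · refine Finset.sum_congr rfl fun j hj => ?_
      rw [Finset.mem_filter] at hj
      rw [hHne j hj.2, map_add, map_mul, rename_C, map_sum, ← rename_rename]
      simp only [rename_X]
  have hcard1 : (PS N t ht γ g).support.card = ∑ j : Fin t, (H j).support.card := by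
    rw [hPS, card_support_sum_X_mul_rename]
  have hcard2 : (shiftX b (PS N t ht γ g)).support.card
      = ∑ j : Fin t, (shift1 b (H j)).support.card := by
    rw [hPS, shiftX_sum_eq, card_support_sum_X_mul_rename]
  -- facts about `H j` for `j ≠ z`
  have hcoeff0_ne : ∀ j : Fin t, j ≠ z → coeff 0 (H j) = γ * coeff 0 (g j) := by
    intro j hj
    rw [hHne j hj, coeff_add, coeff_C_mul, MvPolynomial.coeff_sum]
    have h0 : coeff (0 : Fin (N+1) →₀ ℕ) (rename Fin.succ (g j)) = coeff 0 (g j) := by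
      have := coeff_rename_mapDomain Fin.succ (Fin.succ_injective N) (g j) 0
      rwa [Finsupp.mapDomain_zero] at this
    rw [h0]
    simp [coeff_zero_X]
  have heval_ne : ∀ j : Fin t, j ≠ z → eval b (H j) = γ * ev j := by
    intro j hj
    rw [hHne j hj, map_add, map_mul, eval_C, map_sum]
    simp only [eval_X, hbsum, eval_rename]
    rw [add_zero, hev]
    rfl
  -- the key counting identity per index
  have key : ∀ j : Fin t, (shift1 b (H j)).support.card + (if j = z then 1 else 0)
      = (H j).support.card + (if ev j ≠ 0 then 1 else 0) := by
    intro j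
    by_cases hj : j = z
    · have hrw : H j = rename Fin.succ (g j) := by rw [hj, hHz]
      have hdeg : (H j).totalDegree ≤ 1 := by
        rw [hrw]
        refine le_trans (totalDegree_rename_le _ _) ?_
        rw [hj]; exact hg1deg
      have h1 := card_shift1_deg_le_one b (H j) hdeg
      have hc0 : coeff 0 (H j) = coeff 0 (g j) := by
        rw [hrw]
        have := coeff_rename_mapDomain Fin.succ (Fin.succ_injective N) (g j) 0
        rwa [Finsupp.mapDomain_zero] at this
      have hev0 : eval b (H j) = ev j := by
        rw [hrw, eval_rename, hev]
        rfl
      rw [hc0, hev0, if_pos (show coeff 0 (g j) ≠ 0 by rw [hj]; exact hg1const)] at h1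
      rw [if_pos hj]
      exact h1
    · have hγev : (if γ * ev j ≠ 0 then 1 else 0) = (if ev j ≠ 0 then 1 else 0) := by
        by_cases hevj : ev j = 0
        · simp [hevj]
        · simp [hevj, mul_ne_zero hγ0 hevj]
      rcases hgi j hj with ⟨p, q, e, hpq, hpe, hqe, hg⟩ | ⟨hne, hhom⟩
      · -- quadratic binomial case
        have hrw : H j = C γ * (X p.succ - X q.succ * X e.succ) + ∑ k : Fin (N+1), X k := by
          rw [hHne j hj, hg, map_sub, map_mul, rename_X, rename_X, rename_X]
        have hc0 : coeff 0 (g j) = 0 := by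
          have hcc : constantCoeff (g j) = 0 := by rw [hg]; simp
          rwa [constantCoeff_eq] at hcc
        have h1 := card_shift1_eq b (H j) (by
          rw [hrw]
          exact quad_erase_support γ hγ b p.succ q.succ e.succ
            (fun hc => hpq (Fin.succ_injective N hc))
            (fun hc => hpe (Fin.succ_injective N hc))
            (fun hc => hqe (Fin.succ_injective N hc)))
        rw [hcoeff0_ne j hj, hc0, mul_zero, heval_ne j hj,
          if_neg (show ¬ ((0:R) ≠ 0) by simp), hγev] at h1
        rw [if_neg hj, h1]
      · -- homogeneous linear case
        have hrw := hHne j hj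
        have hdeg : (H j).totalDegree ≤ 1 := by
          rw [hrw]
          refine le_trans (totalDegree_add _ _) (max_le ?_ ?_)
          · refine le_trans (totalDegree_mul _ _) ?_
            rw [totalDegree_C, zero_add]
            exact le_trans (totalDegree_rename_le _ _) hhom.totalDegree_le
          · refine le_trans (totalDegree_finset_sum _ _) ?_
            exact Finset.sup_le fun k _ => le_of_eq (totalDegree_X k)
        have hc0 : coeff 0 (g j) = 0 :=
          hhom.coeff_eq_zero (by rw [map_zero]; exact zero_ne_one)
        have h1 := card_shift1_deg_le_one b (H j) hdeg
        rw [hcoeff0_ne j hj, hc0, mul_zero, heval_ne j hj,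
          if_neg (show ¬ ((0:R) ≠ 0) by simp), hγev] at h1
        rw [if_neg hj, h1]
  -- sum it up
  have hsum : (∑ j : Fin t, (shift1 b (H j)).support.card) + 1
      = (∑ j : Fin t, (H j).support.card)
        + ∑ j : Fin t, (if ev j ≠ 0 then 1 else 0) := by
    have h1 : ∑ j : Fin t, ((shift1 b (H j)).support.card + (if j = z then 1 else 0))
        = ∑ j : Fin t, ((H j).support.card + (if ev j ≠ 0 then 1 else 0)) :=
      Finset.sum_congr rfl fun j _ => key j
    rw [Finset.sum_add_distrib, Finset.sum_add_distrib,
      Finset.sum_ite_eq' Finset.univ z (fun _ => 1), if_pos (Finset.mem_univ z)] at h1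
    exact h1
  intro i
  by_contra hce
  have hterm : 1 ≤ ∑ j : Fin t, (if ev j ≠ 0 then 1 else 0) := by
    have h2 : (if ev i ≠ 0 then 1 else 0) ≤ ∑ j : Fin t, (if ev j ≠ 0 then 1 else 0) :=
      Finset.single_le_sum (f := fun j => if ev j ≠ 0 then (1 : ℕ) else 0)
        (fun _ _ => Nat.zero_le _) (Finset.mem_univ i)
    rwa [if_pos (show ev i ≠ 0 from hce)] at h2
  rw [hcard1, hcard2] at hsp
  omega
end

section
/- Let R be a commutative ring and f_1, …, f_r ∈ R[x_1,…,x_n]. Then there exist an integer N ≥ n and polynomials g_1, …, g_t ∈ R[x_1,…,x_N], each of which is either of the form x_a − x_b·x_c for some indices a, b, c, or an affine linear polynomial (total degree at most 1), such that: (i) every common zero a ∈ R^n of f_1,…,f_r extends to a common zero a′ ∈ R^N of g_1,…,g_t whose first n coordinates are a; and (ii) for every common zero a′ ∈ R^N of g_1,…,g_t, its first n coordinates form a common zero of f_1,…,f_r. In particular every g_j has total degree at most 2. -/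
open MvPolynomial

lemma totalDegree_X_le' {R : Type*} [CommRing R] {σ : Type*} (s : σ) :
    (X s : MvPolynomial σ R).totalDegree ≤ 1 := by
  rw [X]
  exact (totalDegree_monomial_le _ _).trans (by simp)

/-- A polynomial is "good" if it is a quadratic binomial `X p - X q * X e`
or has total degree at most one. -/
def GoodPoly {R : Type*} [CommRing R] {σ : Type*} (g : MvPolynomial σ R) : Prop :=
  (∃ p q e : σ, g = X p - X q * X e) ∨ g.totalDegree ≤ 1

lemma goodPoly_totalDegree_le_two {R : Type*} [CommRing R] {σ : Type*}
    {g : MvPolynomial σ R} (h : GoodPoly g) : g.totalDegree ≤ 2 := by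
  rcases h with ⟨p, q, e, rfl⟩ | h
  · refine (totalDegree_sub _ _).trans (max_le ((totalDegree_X_le' p).trans (by norm_num)) ?_)
    exact (totalDegree_mul _ _).trans
      (by have := totalDegree_X_le' (R := R) q; have := totalDegree_X_le' (R := R) e; omega)
  · omega

lemma goodPoly_rename {R : Type*} [CommRing R] {σ τ : Type*} (h : σ → τ)
    {g : MvPolynomial σ R} (hg : GoodPoly g) : GoodPoly (rename h g) := by
  rcases hg with ⟨p, q, e, rfl⟩ | hd
  · exact Or.inl ⟨h p, h q, h e, by simp [map_sub, map_mul, rename_X]⟩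
  · exact Or.inr ((totalDegree_rename_le h g).trans hd)

/-- Gadget: a system of good polynomials computing the value of `f` into a
fresh output variable. -/
lemma gadget {R : Type*} [CommRing R] {n : ℕ} (f : MvPolynomial (Fin n) R) :
    ∃ (τ ι : Type) (_ : Fintype τ) (_ : Fintype ι)
      (g : ι → MvPolynomial (Fin n ⊕ τ) R) (v : Fin n ⊕ τ),
      (∀ j, GoodPoly (g j))
      ∧ (∀ a : Fin n → R, ∃ b : τ → R,
          (∀ j, eval (Sum.elim a b) (g j) = 0) ∧ Sum.elim a b v = eval a f)
      ∧ (∀ c : Fin n ⊕ τ → R, (∀ j, eval c (g j) = 0) →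
          c v = eval (c ∘ Sum.inl) f) := by
  induction f using MvPolynomial.induction_on with
  | C r =>
    refine ⟨PUnit, PUnit, inferInstance, inferInstance,
      fun _ => X (Sum.inr PUnit.unit) - C r, Sum.inr PUnit.unit, ?_, ?_, ?_⟩
    · intro j
      refine Or.inr ((totalDegree_sub _ _).trans (max_le (totalDegree_X_le' _) ?_))
      simp [totalDegree_C]
    · intro a
      exact ⟨fun _ => r, fun j => by simp, by simp⟩
    · intro c hc
      have h := hc PUnit.unit
      simp only [map_sub, eval_X, eval_C, sub_eq_zero] at h
      simpa using h
  | add p q hp hq =>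
    obtain ⟨τ₁, ι₁, _, _, g₁, v₁, hg₁, hc₁, hs₁⟩ := hp
    obtain ⟨τ₂, ι₂, _, _, g₂, v₂, hg₂, hc₂, hs₂⟩ := hq
    set τ := (τ₁ ⊕ τ₂) ⊕ Unit with hτ
    let emb₁ : Fin n ⊕ τ₁ → Fin n ⊕ τ := Sum.map id (fun s => Sum.inl (Sum.inl s))
    let emb₂ : Fin n ⊕ τ₂ → Fin n ⊕ τ := Sum.map id (fun s => Sum.inl (Sum.inr s))
    let w : Fin n ⊕ τ := Sum.inr (Sum.inr ())
    refine ⟨τ, (ι₁ ⊕ ι₂) ⊕ Unit, inferInstance, inferInstance,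
      Sum.elim (Sum.elim (fun j => rename emb₁ (g₁ j)) (fun j => rename emb₂ (g₂ j)))
        (fun _ => X w - X (emb₁ v₁) - X (emb₂ v₂)), w, ?_, ?_, ?_⟩
    · rintro ((j | j) | j)
      · exact goodPoly_rename _ (hg₁ j)
      · exact goodPoly_rename _ (hg₂ j)
      · refine Or.inr ((totalDegree_sub _ _).trans (max_le ?_ (totalDegree_X_le' _)))
        exact (totalDegree_sub _ _).trans (max_le (totalDegree_X_le' _) (totalDegree_X_le' _))
    · intro a
      obtain ⟨b₁, hb₁, hv₁⟩ := hc₁ a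
      obtain ⟨b₂, hb₂, hv₂⟩ := hc₂ a
      refine ⟨Sum.elim (Sum.elim b₁ b₂) (fun _ => eval a p + eval a q), ?_, by rw [map_add]; exact rfl⟩
      have he₁ : Sum.elim a (Sum.elim (Sum.elim b₁ b₂) (fun _ => eval a p + eval a q)) ∘ emb₁
          = Sum.elim a b₁ := by funext x; cases x <;> rfl
      have he₂ : Sum.elim a (Sum.elim (Sum.elim b₁ b₂) (fun _ => eval a p + eval a q)) ∘ emb₂
          = Sum.elim a b₂ := by funext x; cases x <;> rfl
      rintro ((j | j) | j)
      · simpa [eval_rename, he₁] using hb₁ j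
      · simpa [eval_rename, he₂] using hb₂ j
      · have e1 : Sum.elim a (Sum.elim (Sum.elim b₁ b₂) (fun _ => eval a p + eval a q)) (emb₁ v₁)
            = eval a p := by
          have h := congrFun he₁ v₁
          rw [Function.comp_apply] at h; rw [h, hv₁]
        have e2 : Sum.elim a (Sum.elim (Sum.elim b₁ b₂) (fun _ => eval a p + eval a q)) (emb₂ v₂)
            = eval a q := by
          have h := congrFun he₂ v₂
          rw [Function.comp_apply] at h; rw [h, hv₂]
        have ew : Sum.elim a (Sum.elim (Sum.elim b₁ b₂) (fun _ => eval a p + eval a q)) w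
            = eval a p + eval a q := rfl
        simp only [Sum.elim_inr, map_sub, eval_X, e1, e2, ew]
        ring
    · intro c hc
      have h1 : ∀ j, eval (c ∘ emb₁) (g₁ j) = 0 := by
        intro j; have := hc (Sum.inl (Sum.inl j)); simpa [eval_rename] using this
      have h2 : ∀ j, eval (c ∘ emb₂) (g₂ j) = 0 := by
        intro j; have := hc (Sum.inl (Sum.inr j)); simpa [eval_rename] using this
      have e1 : c (emb₁ v₁) = eval (c ∘ Sum.inl) p := by
        have h := hs₁ _ h1
        have hcomp : (c ∘ emb₁) ∘ Sum.inl = c ∘ Sum.inl := by funext x; rfl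
        rw [hcomp] at h; exact h
      have e2 : c (emb₂ v₂) = eval (c ∘ Sum.inl) q := by
        have h := hs₂ _ h2
        have hcomp : (c ∘ emb₂) ∘ Sum.inl = c ∘ Sum.inl := by funext x; rfl
        rw [hcomp] at h; exact h
      have h := hc (Sum.inr ())
      simp only [Sum.elim_inr, map_sub, eval_X] at h
      rw [map_add, ← e1, ← e2]
      linear_combination h
  | mul_X p i hp =>
    obtain ⟨τ₁, ι₁, _, _, g₁, v₁, hg₁, hc₁, hs₁⟩ := hp
    set τ := τ₁ ⊕ Unit with hτ
    let emb : Fin n ⊕ τ₁ → Fin n ⊕ τ := Sum.map id Sum.inl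
    let w : Fin n ⊕ τ := Sum.inr (Sum.inr ())
    refine ⟨τ, ι₁ ⊕ Unit, inferInstance, inferInstance,
      Sum.elim (fun j => rename emb (g₁ j))
        (fun _ => X w - X (emb v₁) * X (Sum.inl i)), w, ?_, ?_, ?_⟩
    · rintro (j | j)
      · exact goodPoly_rename _ (hg₁ j)
      · exact Or.inl ⟨w, emb v₁, Sum.inl i, rfl⟩
    · intro a
      obtain ⟨b₁, hb₁, hv₁⟩ := hc₁ a
      refine ⟨Sum.elim b₁ (fun _ => eval a p * a i), ?_, by rw [map_mul, eval_X]; exact rfl⟩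
      have he : Sum.elim a (Sum.elim b₁ (fun _ => eval a p * a i)) ∘ emb = Sum.elim a b₁ := by
        funext x; cases x <;> rfl
      rintro (j | j)
      · simpa [eval_rename, he] using hb₁ j
      · have e1 : Sum.elim a (Sum.elim b₁ (fun _ => eval a p * a i)) (emb v₁) = eval a p := by
          have h := congrFun he v₁
          rw [Function.comp_apply] at h; rw [h, hv₁]
        have ew : Sum.elim a (Sum.elim b₁ (fun _ => eval a p * a i)) w = eval a p * a i := rfl
        simp only [Sum.elim_inr, Sum.elim_inl, map_sub, map_mul, eval_X, e1, ew]
        ring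
    · intro c hc
      have h1 : ∀ j, eval (c ∘ emb) (g₁ j) = 0 := by
        intro j; have := hc (Sum.inl j); simpa [eval_rename] using this
      have e1 : c (emb v₁) = eval (c ∘ Sum.inl) p := by
        have h := hs₁ _ h1
        have hcomp : (c ∘ emb) ∘ Sum.inl = c ∘ Sum.inl := by funext x; rfl
        rw [hcomp] at h; exact h
      have h := hc (Sum.inr ())
      simp only [Sum.elim_inr, map_sub, map_mul, eval_X, sub_eq_zero] at h
      rw [h, e1, map_mul, eval_X]; rfl

/-- **Lemma 3.1/3.2:** over a commutative ring `R`, every system of polynomial equations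
`f_1 = ⋯ = f_r = 0` in `R[x_1,…,x_n]` is equivalent, over an extended variable set
`x_1,…,x_N` (`N ≥ n`), to a system `g_1 = ⋯ = g_t = 0` in which every `g_j` is either a
quadratic binomial `x_a − x_b·x_c` or an affine linear polynomial (total degree at
most `1`): every common zero of the `f_i` extends to a common zero of the `g_j` with the
same first `n` coordinates, and the first `n` coordinates of any common zero of the
`g_j` form a common zero of the `f_i`. In particular every `g_j` has total degree at
most `2`. -/
theorem exists_quadratic_system {R : Type*} [CommRing R] (n r : ℕ)
    (f : Fin r → MvPolynomial (Fin n) R) :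
    ∃ (N : ℕ) (hnN : n ≤ N) (t : ℕ) (g : Fin t → MvPolynomial (Fin N) R),
      (∀ j, (∃ p q e : Fin N, g j = X p - X q * X e) ∨ (g j).totalDegree ≤ 1)
      ∧ (∀ j, (g j).totalDegree ≤ 2)
      ∧ (∀ a : Fin n → R, (∀ i, eval a (f i) = 0) →
          ∃ a' : Fin N → R, (∀ k : Fin n, a' (Fin.castLE hnN k) = a k)
            ∧ ∀ j, eval a' (g j) = 0)
      ∧ (∀ a' : Fin N → R, (∀ j, eval a' (g j) = 0) →
          ∀ i, eval (fun k : Fin n => a' (Fin.castLE hnN k)) (f i) = 0) := by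
  choose τ ι instτ instι g v hgood hcomp hsound using fun i => gadget (f i)
  haveI : ∀ i, Fintype (τ i) := instτ
  haveI : ∀ i, Fintype (ι i) := instι
  let T := (i : Fin r) × τ i
  let I := ((i : Fin r) × ι i) ⊕ Fin r
  let emb : ∀ i, (Fin n ⊕ τ i) → (Fin n ⊕ T) := fun i => Sum.map id (fun s => ⟨i, s⟩)
  let G : I → MvPolynomial (Fin n ⊕ T) R :=
    Sum.elim (fun k => rename (emb k.1) (g k.1 k.2)) (fun i => X (emb i (v i)))
  have hGgood : ∀ k, GoodPoly (G k) := by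
    rintro (⟨i, j⟩ | i)
    · exact goodPoly_rename _ (hgood i j)
    · exact Or.inr (totalDegree_X_le' _)
  let m := Fintype.card T
  let eT : T ≃ Fin m := Fintype.equivFin T
  let E : (Fin n ⊕ T) ≃ Fin (n + m) := (Equiv.sumCongr (Equiv.refl _) eT).trans finSumFinEquiv
  have hE : ∀ k : Fin n, E (Sum.inl k) = Fin.castLE (Nat.le_add_right n m) k := by
    intro k
    apply Fin.ext
    simp [E, finSumFinEquiv]
  let t := Fintype.card I
  let eI : Fin t ≃ I := Fintype.equivFin I |>.symm
  refine ⟨n + m, Nat.le_add_right n m, t, fun j => rename E (G (eI j)), ?_, ?_, ?_, ?_⟩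
  · intro j
    exact (goodPoly_rename E (hGgood (eI j)) : GoodPoly _)
  · intro j
    exact goodPoly_totalDegree_le_two (goodPoly_rename E (hGgood (eI j)))
  · intro a ha
    choose b hb hv using fun i => hcomp i a
    let c : Fin n ⊕ T → R := Sum.elim a (fun s => b s.1 s.2)
    have hce : ∀ i, c ∘ emb i = Sum.elim a (b i) := by
      intro i; funext x; cases x <;> rfl
    refine ⟨c ∘ E.symm, ?_, ?_⟩
    · intro k
      have : E.symm (Fin.castLE (Nat.le_add_right n m) k) = Sum.inl k := by
        rw [← hE k, Equiv.symm_apply_apply]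
      simp only [Function.comp_apply, this]
      rfl
    · intro j
      have hcE : (c ∘ E.symm) ∘ E = c := by
        funext x; simp only [Function.comp_apply, Equiv.symm_apply_apply]
      rw [eval_rename, hcE]
      rcases eI j with ⟨i, k⟩ | i
      · show eval c (rename (emb i) (g i k)) = 0
        rw [eval_rename, hce i]
        exact hb i k
      · show eval c (X (emb i (v i))) = 0
        rw [eval_X]
        have := congrFun (hce i) (v i)
        rw [Function.comp_apply] at this
        rw [this, hv i, ha i]
  · intro a' ha' i
    set c : Fin n ⊕ T → R := a' ∘ E with hc
    have hall : ∀ k : I, eval c (G k) = 0 := by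
      intro k
      have := ha' (eI.symm k)
      rw [eval_rename] at this
      simpa [Equiv.apply_symm_apply] using this
    have h1 : ∀ j, eval (c ∘ emb i) (g i j) = 0 := by
      intro j
      have := hall (Sum.inl ⟨i, j⟩)
      rw [show G (Sum.inl ⟨i, j⟩) = rename (emb i) (g i j) from rfl, eval_rename] at this
      exact this
    have e1 : c (emb i (v i)) = eval (c ∘ Sum.inl) (f i) := by
      have h := hsound i _ h1
      have hcomp' : (c ∘ emb i) ∘ Sum.inl = c ∘ Sum.inl := by funext x; rfl
      rw [hcomp'] at h; exact h
    have e0 : c (emb i (v i)) = 0 := by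
      have := hall (Sum.inr i)
      rw [show G (Sum.inr i) = X (emb i (v i)) from rfl, eval_X] at this
      exact this
    have hfin : (fun k : Fin n => a' (Fin.castLE (Nat.le_add_right n m) k)) = c ∘ Sum.inl := by
      funext k
      rw [hc, Function.comp_apply, Function.comp_apply, hE k]
    rw [hfin, ← e1, e0]
end
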